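/- arXiv:1309.5795 — 14 statements merged into one kernel-verified Lean document; each statement's English description precedes it below -/
import Mathlib

section
/- If in addition there exists c ∈ (a,b) such that ϕ'(θ) ≤ 0 for all θ ∈ (a,c] and ϕ'(θ) ≥ 0 for all θ ∈ [c,b), then |v(θ,θ̃)| ≤ √(2/ϕ(c)) for all θ, θ̃ ∈ (a,b). -/
/-!
For a solution `w` of `w'' + ϕ w = 0` with `ϕ > 0`, the energy `w² + w'²/ϕ` has derivative
`-w'² ϕ'/ϕ²`, so it increases up to the minimum point `c` of `ϕ` and decreases after it; hence
`w(θ)² ≤ w(c)² + w'(c)²/ϕ(c)`. Applied to `v(·, θ̃)` this bounds `v(θ, θ̃)²` by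
`v(c, θ̃)² + ∂_θ v(c, θ̃)²/ϕ(c)`. Both `v(c, ·)` and `∂_θ v(c, ·)` are again solutions, and by the
Wronskian normalization their energies at `c` are `1/ϕ(c)` and `1`, which gives `v(θ, θ̃)² ≤ 2/ϕ(c)`.
-/

open Set

/-- `w` solves `w'' + ϕ w = 0` on `s`, written as the first-order system `(w, w')`. -/
def IsSolutionOn (ϕ : ℝ → ℝ) (s : Set ℝ) (w w' : ℝ → ℝ) : Prop :=
  ∀ x ∈ s, HasDerivAt w (w' x) x ∧ HasDerivAt w' (-(ϕ x * w x)) x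

noncomputable def energy (ϕ w w' : ℝ → ℝ) (x : ℝ) : ℝ :=
  w x ^ 2 + w' x ^ 2 / ϕ x

theorem isMaxOn_of_hasDerivAt_of_nonneg_of_nonpos {f f' : ℝ → ℝ} {a b c : ℝ}
    (hc : c ∈ Ioo a b) (hf : ∀ x ∈ Ioo a b, HasDerivAt f (f' x) x)
    (hleft : ∀ x ∈ Ioo a c, 0 ≤ f' x) (hright : ∀ x ∈ Ioo c b, f' x ≤ 0) :
    IsMaxOn f (Ioo a b) c := by
  have hcont : ContinuousOn f (Ioo a b) := fun x hx => (hf x hx).continuousAt.continuousWithinAt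
  intro x hx
  rcases le_total x c with hxc | hcx
  · have hmono : MonotoneOn f (Ioc a c) := by
      refine monotoneOn_of_hasDerivWithinAt_nonneg (f' := f') (convex_Ioc a c)
        (hcont.mono (Ioc_subset_Ioo_right hc.2)) (fun y hy => ?_) (fun y hy => ?_)
      all_goals simp only [interior_Ioc] at hy ⊢
      · exact (hf y (Ioo_subset_Ioo_right hc.2.le hy)).hasDerivWithinAt
      · exact hleft y hy
    exact hmono ⟨hx.1, hxc⟩ ⟨hc.1, le_rfl⟩ hxc
  · have hanti : AntitoneOn f (Ico c b) := by
      refine antitoneOn_of_hasDerivWithinAt_nonpos (f' := f') (convex_Ico c b)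
        (hcont.mono (Ico_subset_Ioo_left hc.1)) (fun y hy => ?_) (fun y hy => ?_)
      all_goals simp only [interior_Ico] at hy ⊢
      · exact (hf y (Ioo_subset_Ioo_left hc.1.le hy)).hasDerivWithinAt
      · exact hright y hy
    exact hanti ⟨le_rfl, hc.2⟩ ⟨hcx, hx.2⟩ hcx

namespace IsSolutionOn

variable {ϕ : ℝ → ℝ} {s : Set ℝ} {u u' v v' : ℝ → ℝ}

theorem linear_combination (hu : IsSolutionOn ϕ s u u') (hv : IsSolutionOn ϕ s v v') (α β : ℝ) :
    IsSolutionOn ϕ s (fun x => α * u x + β * v x) (fun x => α * u' x + β * v' x) := by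
  intro x hx
  obtain ⟨hu₁, hu₂⟩ := hu x hx
  obtain ⟨hv₁, hv₂⟩ := hv x hx
  exact ⟨(hu₁.const_mul α).add (hv₁.const_mul β),
    ((hu₂.const_mul α).add (hv₂.const_mul β)).congr_deriv (by ring)⟩

theorem hasDerivAt_energy {ϕ' : ℝ → ℝ} (hu : IsSolutionOn ϕ s u u') {x : ℝ} (hx : x ∈ s)
    (hϕ : HasDerivAt ϕ (ϕ' x) x) (hϕx : ϕ x ≠ 0) :
    HasDerivAt (energy ϕ u u') (-(u' x ^ 2 * ϕ' x) / ϕ x ^ 2) x := by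
  obtain ⟨hu₁, hu₂⟩ := hu x hx
  refine ((hu₁.pow 2).add ((hu₂.pow 2).div hϕ hϕx)).congr_deriv ?_
  simp only [Pi.pow_apply]
  field_simp
  ring

theorem energy_le_energy {ϕ' : ℝ → ℝ} {a b c : ℝ} (hu : IsSolutionOn ϕ (Ioo a b) u u')
    (hϕ : ∀ x ∈ Ioo a b, HasDerivAt ϕ (ϕ' x) x) (hϕpos : ∀ x ∈ Ioo a b, 0 < ϕ x)
    (hc : c ∈ Ioo a b) (hdec : ∀ x ∈ Ioo a c, ϕ' x ≤ 0) (hinc : ∀ x ∈ Ioo c b, 0 ≤ ϕ' x)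
    {θ : ℝ} (hθ : θ ∈ Ioo a b) :
    energy ϕ u u' θ ≤ energy ϕ u u' c := by
  have hab : Ioo a c ⊆ Ioo a b := Ioo_subset_Ioo_right hc.2.le
  have hcb : Ioo c b ⊆ Ioo a b := Ioo_subset_Ioo_left hc.1.le
  refine isMaxOn_of_hasDerivAt_of_nonneg_of_nonpos hc
    (fun x hx => hu.hasDerivAt_energy hx (hϕ x hx) (hϕpos x hx).ne') (fun x hx => ?_)
    (fun x hx => ?_) hθ
  · have := mul_nonneg (sq_nonneg (u' x)) (neg_nonneg.2 (hdec x hx))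
    exact div_nonneg (by linarith) (sq_nonneg _)
  · have := mul_nonneg (sq_nonneg (u' x)) (hinc x hx)
    exact div_nonpos_of_nonpos_of_nonneg (by linarith) (sq_nonneg _)

theorem sq_le_energy {ϕ' : ℝ → ℝ} {a b c : ℝ} (hu : IsSolutionOn ϕ (Ioo a b) u u')
    (hϕ : ∀ x ∈ Ioo a b, HasDerivAt ϕ (ϕ' x) x) (hϕpos : ∀ x ∈ Ioo a b, 0 < ϕ x)
    (hc : c ∈ Ioo a b) (hdec : ∀ x ∈ Ioo a c, ϕ' x ≤ 0) (hinc : ∀ x ∈ Ioo c b, 0 ≤ ϕ' x)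
    {θ : ℝ} (hθ : θ ∈ Ioo a b) :
    u θ ^ 2 ≤ u c ^ 2 + u' c ^ 2 / ϕ c := by
  have h := hu.energy_le_energy hϕ hϕpos hc hdec hinc hθ
  have := div_nonneg (sq_nonneg (u' θ)) (hϕpos θ hθ).le
  unfold energy at h
  linarith

end IsSolutionOn

theorem stmt_0_general (a b : ℝ)
    (ϕ ϕd uI uId uIdd uII uIId uIIdd : ℝ → ℝ)
    (hϕd : ∀ θ ∈ Set.Ioo a b, HasDerivAt ϕ (ϕd θ) θ)
    (hϕpos : ∀ θ ∈ Set.Ioo a b, 0 < ϕ θ)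
    (huId : ∀ θ ∈ Set.Ioo a b, HasDerivAt uI (uId θ) θ)
    (huIdd : ∀ θ ∈ Set.Ioo a b, HasDerivAt uId (uIdd θ) θ)
    (huIId : ∀ θ ∈ Set.Ioo a b, HasDerivAt uII (uIId θ) θ)
    (huIIdd : ∀ θ ∈ Set.Ioo a b, HasDerivAt uIId (uIIdd θ) θ)
    (hodeI : ∀ θ ∈ Set.Ioo a b, uIdd θ + ϕ θ * uI θ = 0)
    (hodeII : ∀ θ ∈ Set.Ioo a b, uIIdd θ + ϕ θ * uII θ = 0)
    (hW : ∀ θ ∈ Set.Ioo a b, uI θ * uIId θ - uId θ * uII θ = 1)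
    (c : ℝ) (hc : c ∈ Set.Ioo a b)
    (hdec : ∀ θ ∈ Set.Ioc a c, ϕd θ ≤ 0)
    (hinc : ∀ θ ∈ Set.Ico c b, 0 ≤ ϕd θ) :
    ∀ θ ∈ Set.Ioo a b, ∀ θt ∈ Set.Ioo a b,
      |uI θ * uII θt - uI θt * uII θ| ≤ Real.sqrt (2 / ϕ c) := by
  intro θ hθ θt hθt
  have hI : IsSolutionOn ϕ (Ioo a b) uI uId := fun x hx =>
    ⟨huId x hx, (huIdd x hx).congr_deriv (by linarith [hodeI x hx])⟩
  have hII : IsSolutionOn ϕ (Ioo a b) uII uIId := fun x hx =>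
    ⟨huIId x hx, (huIIdd x hx).congr_deriv (by linarith [hodeII x hx])⟩
  have sq_le := fun {u u'} (hu : IsSolutionOn ϕ (Ioo a b) u u') {x} (hx : x ∈ Ioo a b) =>
    hu.sq_le_energy hϕd hϕpos hc (fun y hy => hdec y (Ioo_subset_Ioc_self hy))
      (fun y hy => hinc y (Ioo_subset_Ico_self hy)) hx
  have hWc : (uI c * uIId c - uId c * uII c) ^ 2 = 1 := by rw [hW c hc]; norm_num
  have hϕc := hϕpos c hc
  have hv : (uI θ * uII θt - uI θt * uII θ) ^ 2 ≤
      (uI c * uII θt - uI θt * uII c) ^ 2 + (uId c * uII θt - uI θt * uIId c) ^ 2 / ϕ c := by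
    convert sq_le (hI.linear_combination hII (uII θt) (-uI θt)) hθ using 2 <;> ring
  have hvc : (uI c * uII θt - uI θt * uII c) ^ 2 ≤ 1 / ϕ c := by
    convert sq_le (hII.linear_combination hI (uI c) (-uII c)) hθt using 1
    · ring
    · rw [← hWc]; ring
  have hvθc : (uId c * uII θt - uI θt * uIId c) ^ 2 ≤ 1 := by
    convert sq_le (hII.linear_combination hI (uId c) (-uIId c)) hθt using 1
    · ring
    · rw [← hWc]; ring
  have hsq : (uI θ * uII θt - uI θt * uII θ) ^ 2 ≤ 2 / ϕ c := by
    have := div_le_div_of_nonneg_right hvθc hϕc.le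
    linarith [show (2 : ℝ) / ϕ c = 1 / ϕ c + 1 / ϕ c by ring]
  rw [← Real.sqrt_sq_eq_abs]
  exact Real.sqrt_le_sqrt hsq

/-- Theorem 3.1 (first part): under the one-sided monotonicity of ϕ around a point c,
    |v(θ,θ̃)| ≤ √(2/ϕ(c)) for all θ, θ̃ ∈ (a,b). -/
theorem stmt_0 (a b : ℝ) (hab : a < b)
    (ϕ ϕd uI uId uIdd uII uIId uIIdd : ℝ → ℝ)
    (hϕd : ∀ θ ∈ Set.Ioo a b, HasDerivAt ϕ (ϕd θ) θ)
    (hϕdc : ContinuousOn ϕd (Set.Ioo a b))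
    (hϕpos : ∀ θ ∈ Set.Ioo a b, 0 < ϕ θ)
    (huId : ∀ θ ∈ Set.Ioo a b, HasDerivAt uI (uId θ) θ)
    (huIdd : ∀ θ ∈ Set.Ioo a b, HasDerivAt uId (uIdd θ) θ)
    (huIId : ∀ θ ∈ Set.Ioo a b, HasDerivAt uII (uIId θ) θ)
    (huIIdd : ∀ θ ∈ Set.Ioo a b, HasDerivAt uIId (uIIdd θ) θ)
    (hodeI : ∀ θ ∈ Set.Ioo a b, uIdd θ + ϕ θ * uI θ = 0)
    (hodeII : ∀ θ ∈ Set.Ioo a b, uIIdd θ + ϕ θ * uII θ = 0)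
    (hW : ∀ θ ∈ Set.Ioo a b, uI θ * uIId θ - uId θ * uII θ = 1)
    (c : ℝ) (hc : c ∈ Set.Ioo a b)
    (hdec : ∀ θ ∈ Set.Ioc a c, ϕd θ ≤ 0)
    (hinc : ∀ θ ∈ Set.Ico c b, 0 ≤ ϕd θ) :
    ∀ θ ∈ Set.Ioo a b, ∀ θt ∈ Set.Ioo a b,
      |uI θ * uII θt - uI θt * uII θ| ≤ Real.sqrt (2 / ϕ c) :=
  stmt_0_general a b ϕ ϕd uI uId uIdd uII uIId uIIdd hϕd hϕpos huId huIdd huIId huIIdd hodeI hodeII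
    hW c hc hdec hinc
end

section
/- If in addition ϕ'(θ) ≤ 0 for all θ ∈ (a,b), or ϕ'(θ) ≥ 0 for all θ ∈ (a,b), then |v(θ,θ̃)| ≤ max(√(1/ϕ(θ)), √(1/ϕ(θ̃))) for all θ, θ̃ ∈ (a,b). -/
/-!
For fixed `θ̃`, `w = v(·, θ̃)` solves `w'' + ϕ w = 0` with `w(θ̃) = 0` and, by the Wronskian
normalization, `w'(θ̃) = -1`. Its energy `E = w² + w'²/ϕ` has `E' = -ϕ' (w'/ϕ)²`, so `E` is
monotone with direction fixed by the sign of `ϕ'`. Hence `w(θ)² ≤ E(θ) ≤ E(θ̃) = 1/ϕ(θ̃)` on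
one side of `θ̃`; on the other side swap the roles of `θ` and `θ̃`, using `v(θ, θ̃) = -v(θ̃, θ)`.
-/

noncomputable def oscEnergy (ϕ w w' : ℝ → ℝ) (x : ℝ) : ℝ := w x ^ 2 + w' x ^ 2 / ϕ x

section Oscillator

variable {D : Set ℝ} {ϕ ϕ' w w' : ℝ → ℝ}

theorem hasDerivAt_oscEnergy {x d : ℝ} (hϕ : HasDerivAt ϕ d x) (hϕx : ϕ x ≠ 0)
    (hw : HasDerivAt w (w' x) x) (hw' : HasDerivAt w' (-(ϕ x * w x)) x) :
    HasDerivAt (oscEnergy ϕ w w') (-(d * (w' x / ϕ x) ^ 2)) x :=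
  ((hw.fun_pow 2).add ((hw'.fun_pow 2).div hϕ hϕx)).congr_deriv (by field_simp; ring)

theorem sq_le_oscEnergy {x : ℝ} (hϕx : 0 < ϕ x) : w x ^ 2 ≤ oscEnergy ϕ w w' x :=
  le_add_of_nonneg_right (div_nonneg (sq_nonneg _) hϕx.le)

theorem oscEnergy_eq_inv {c : ℝ} (hw : w c = 0) (hw' : w' c ^ 2 = 1) :
    oscEnergy ϕ w w' c = 1 / ϕ c := by
  simp [oscEnergy, hw, hw']

variable (hϕ : ∀ x ∈ D, HasDerivAt ϕ (ϕ' x) x) (hϕpos : ∀ x ∈ D, 0 < ϕ x)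
  (hw : ∀ x ∈ D, HasDerivAt w (w' x) x) (hw' : ∀ x ∈ D, HasDerivAt w' (-(ϕ x * w x)) x)
include hϕ hϕpos hw hw'

theorem continuousOn_oscEnergy : ContinuousOn (oscEnergy ϕ w w') D := fun x hx =>
  (hasDerivAt_oscEnergy (hϕ x hx) (hϕpos x hx).ne' (hw x hx) (hw' x hx)).continuousAt
    |>.continuousWithinAt

theorem monotoneOn_oscEnergy (hD : Convex ℝ D) (hϕ' : ∀ x ∈ D, ϕ' x ≤ 0) :
    MonotoneOn (oscEnergy ϕ w w') D :=
  monotoneOn_of_hasDerivWithinAt_nonneg hD (continuousOn_oscEnergy hϕ hϕpos hw hw')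
    (fun x hx => (hasDerivAt_oscEnergy (hϕ x (interior_subset hx))
      (hϕpos x (interior_subset hx)).ne' (hw x (interior_subset hx))
      (hw' x (interior_subset hx))).hasDerivWithinAt)
    (fun x hx => neg_nonneg.2 (mul_nonpos_of_nonpos_of_nonneg (hϕ' x (interior_subset hx))
      (sq_nonneg _)))

theorem antitoneOn_oscEnergy (hD : Convex ℝ D) (hϕ' : ∀ x ∈ D, 0 ≤ ϕ' x) :
    AntitoneOn (oscEnergy ϕ w w') D :=
  antitoneOn_of_hasDerivWithinAt_nonpos hD (continuousOn_oscEnergy hϕ hϕpos hw hw')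
    (fun x hx => (hasDerivAt_oscEnergy (hϕ x (interior_subset hx))
      (hϕpos x (interior_subset hx)).ne' (hw x (interior_subset hx))
      (hw' x (interior_subset hx))).hasDerivWithinAt)
    (fun x hx => neg_nonpos.2 (mul_nonneg (hϕ' x (interior_subset hx)) (sq_nonneg _)))

theorem sq_le_inv_of_eq_zero (hD : Convex ℝ D) {c p : ℝ} (hc : c ∈ D) (hp : p ∈ D)
    (hwc : w c = 0) (hw'c : w' c ^ 2 = 1)
    (hside : ((∀ x ∈ D, ϕ' x ≤ 0) ∧ p ≤ c) ∨ ((∀ x ∈ D, 0 ≤ ϕ' x) ∧ c ≤ p)) :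
    w p ^ 2 ≤ 1 / ϕ c := by
  have hEp_le_Ec : oscEnergy ϕ w w' p ≤ oscEnergy ϕ w w' c := by
    rcases hside with ⟨hϕ', hpc⟩ | ⟨hϕ', hcp⟩
    · exact monotoneOn_oscEnergy hϕ hϕpos hw hw' hD hϕ' hp hc hpc
    · exact antitoneOn_oscEnergy hϕ hϕpos hw hw' hD hϕ' hc hp hcp
  calc w p ^ 2 ≤ oscEnergy ϕ w w' p := sq_le_oscEnergy (hϕpos p hp)
    _ ≤ oscEnergy ϕ w w' c := hEp_le_Ec
    _ = 1 / ϕ c := oscEnergy_eq_inv hwc hw'c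

end Oscillator

section Wronskian

variable {D : Set ℝ} {ϕ ϕ' uI uId uIdd uII uIId uIIdd : ℝ → ℝ}
  (hϕ : ∀ x ∈ D, HasDerivAt ϕ (ϕ' x) x) (hϕpos : ∀ x ∈ D, 0 < ϕ x)
  (huId : ∀ x ∈ D, HasDerivAt uI (uId x) x) (huIdd : ∀ x ∈ D, HasDerivAt uId (uIdd x) x)
  (huIId : ∀ x ∈ D, HasDerivAt uII (uIId x) x) (huIIdd : ∀ x ∈ D, HasDerivAt uIId (uIIdd x) x)
  (hodeI : ∀ x ∈ D, uIdd x + ϕ x * uI x = 0) (hodeII : ∀ x ∈ D, uIIdd x + ϕ x * uII x = 0)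
  (hW : ∀ x ∈ D, uI x * uIId x - uId x * uII x = 1)
include hϕ hϕpos huId huIdd huIId huIIdd hodeI hodeII hW

theorem abs_cross_le_sqrt_inv (hD : Convex ℝ D) {s t : ℝ} (hs : s ∈ D) (ht : t ∈ D)
    (hside : ((∀ x ∈ D, ϕ' x ≤ 0) ∧ s ≤ t) ∨ ((∀ x ∈ D, 0 ≤ ϕ' x) ∧ t ≤ s)) :
    |uI s * uII t - uI t * uII s| ≤ √(1 / ϕ t) := by
  have hw : ∀ x ∈ D, HasDerivAt (fun y => uI y * uII t - uI t * uII y)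
      (uId x * uII t - uI t * uIId x) x := fun x hx =>
    ((huId x hx).mul_const _).sub ((huIId x hx).const_mul _)
  have hw' : ∀ x ∈ D, HasDerivAt (fun y => uId y * uII t - uI t * uIId y)
      (-(ϕ x * (uI x * uII t - uI t * uII x))) x := fun x hx =>
    (((huIdd x hx).mul_const (uII t)).sub ((huIIdd x hx).const_mul (uI t))).congr_deriv
      (by linear_combination uII t * hodeI x hx - uI t * hodeII x hx)
  refine Real.abs_le_sqrt (sq_le_inv_of_eq_zero hϕ hϕpos hw hw' hD ht hs (by ring) ?_ hside)
  linear_combination (uI t * uIId t - uId t * uII t + 1) * hW t ht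

end Wronskian

theorem stmt_1_general (a b : ℝ)
    (ϕ ϕd uI uId uIdd uII uIId uIIdd : ℝ → ℝ)
    (hϕd : ∀ θ ∈ Set.Ioo a b, HasDerivAt ϕ (ϕd θ) θ)
    (hϕpos : ∀ θ ∈ Set.Ioo a b, 0 < ϕ θ)
    (huId : ∀ θ ∈ Set.Ioo a b, HasDerivAt uI (uId θ) θ)
    (huIdd : ∀ θ ∈ Set.Ioo a b, HasDerivAt uId (uIdd θ) θ)
    (huIId : ∀ θ ∈ Set.Ioo a b, HasDerivAt uII (uIId θ) θ)
    (huIIdd : ∀ θ ∈ Set.Ioo a b, HasDerivAt uIId (uIIdd θ) θ)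
    (hodeI : ∀ θ ∈ Set.Ioo a b, uIdd θ + ϕ θ * uI θ = 0)
    (hodeII : ∀ θ ∈ Set.Ioo a b, uIIdd θ + ϕ θ * uII θ = 0)
    (hW : ∀ θ ∈ Set.Ioo a b, uI θ * uIId θ - uId θ * uII θ = 1)
    (hsign : (∀ θ ∈ Set.Ioo a b, ϕd θ ≤ 0) ∨ (∀ θ ∈ Set.Ioo a b, 0 ≤ ϕd θ)) :
    ∀ θ ∈ Set.Ioo a b, ∀ θt ∈ Set.Ioo a b,
      |uI θ * uII θt - uI θt * uII θ| ≤
        max (Real.sqrt (1 / ϕ θ)) (Real.sqrt (1 / ϕ θt)) := by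
  intro θ hθ θt hθt
  have key := abs_cross_le_sqrt_inv hϕd hϕpos huId huIdd huIId huIIdd hodeI hodeII hW
    (convex_Ioo a b) hθ hθt
  have key_swap := abs_cross_le_sqrt_inv hϕd hϕpos huId huIdd huIId huIIdd hodeI hodeII hW
    (convex_Ioo a b) hθt hθ
  rw [abs_sub_comm] at key_swap
  rcases hsign with hs | hs <;> rcases le_total θ θt with h | h
  · exact (key (.inl ⟨hs, h⟩)).trans (le_max_right _ _)
  · exact (key_swap (.inl ⟨hs, h⟩)).trans (le_max_left _ _)
  · exact (key_swap (.inr ⟨hs, h⟩)).trans (le_max_left _ _)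
  · exact (key (.inr ⟨hs, h⟩)).trans (le_max_right _ _)

/-- Theorem 3.1 (second part): if ϕ' has a constant sign on all of (a,b), then
    |v(θ,θ̃)| ≤ max(√(1/ϕ(θ)), √(1/ϕ(θ̃))). -/
theorem stmt_1 (a b : ℝ) (hab : a < b)
    (ϕ ϕd uI uId uIdd uII uIId uIIdd : ℝ → ℝ)
    (hϕd : ∀ θ ∈ Set.Ioo a b, HasDerivAt ϕ (ϕd θ) θ)
    (hϕdc : ContinuousOn ϕd (Set.Ioo a b))
    (hϕpos : ∀ θ ∈ Set.Ioo a b, 0 < ϕ θ)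
    (huId : ∀ θ ∈ Set.Ioo a b, HasDerivAt uI (uId θ) θ)
    (huIdd : ∀ θ ∈ Set.Ioo a b, HasDerivAt uId (uIdd θ) θ)
    (huIId : ∀ θ ∈ Set.Ioo a b, HasDerivAt uII (uIId θ) θ)
    (huIIdd : ∀ θ ∈ Set.Ioo a b, HasDerivAt uIId (uIIdd θ) θ)
    (hodeI : ∀ θ ∈ Set.Ioo a b, uIdd θ + ϕ θ * uI θ = 0)
    (hodeII : ∀ θ ∈ Set.Ioo a b, uIIdd θ + ϕ θ * uII θ = 0)
    (hW : ∀ θ ∈ Set.Ioo a b, uI θ * uIId θ - uId θ * uII θ = 1)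
    (hsign : (∀ θ ∈ Set.Ioo a b, ϕd θ ≤ 0) ∨ (∀ θ ∈ Set.Ioo a b, 0 ≤ ϕd θ)) :
    ∀ θ ∈ Set.Ioo a b, ∀ θt ∈ Set.Ioo a b,
      |uI θ * uII θt - uI θt * uII θ| ≤
        max (Real.sqrt (1 / ϕ θ)) (Real.sqrt (1 / ϕ θt)) :=
  stmt_1_general a b ϕ ϕd uI uId uIdd uII uIId uIIdd hϕd hϕpos huId huIdd huIId huIIdd hodeI hodeII
    hW hsign
end

section
/- If in addition there exists c ∈ (a,b) such that ϕ'(θ) ≤ 0 for all θ ∈ (a,c] and ϕ'(θ) ≥ 0 for all θ ∈ [c,b), then for every fixed θ̃ ∈ (a,b) the function θ ↦ f₁(θ,θ̃) is monotone non-decreasing on (a,c] and monotone non-increasing on [c,b), where f₁(θ,θ̃) = v(θ,θ̃)² + ϕ(θ)⁻¹·(∂v/∂θ(θ,θ̃))² and ∂v/∂θ(θ,θ̃) = u_I'(θ)·u_II(θ̃) − u_I(θ̃)·u_II'(θ). -/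
/-!
Sonin–Pólya argument. For a solution `w` of `w'' + ϕ w = 0` with `ϕ ≠ 0`, the Sonin function
`w ^ 2 + ϕ⁻¹ * w' ^ 2` has derivative `-ϕ' w' ^ 2 / ϕ ^ 2`: the terms `2 w w'` and
`2 ϕ⁻¹ w' w'' = -2 w w'` cancel. Its sign is therefore opposite to that of `ϕ'`. The function
`θ ↦ v(θ, θ̃)` is a linear combination of `u_I` and `u_II`, hence again a solution.
-/

open Set

noncomputable def soninFunction (ϕ w w' : ℝ → ℝ) (t : ℝ) : ℝ :=
  w t ^ 2 + (ϕ t)⁻¹ * w' t ^ 2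

section Sonin

variable {ϕ ϕ' w w' w'' : ℝ → ℝ}

theorem hasDerivAt_soninFunction {x : ℝ} (hϕ : HasDerivAt ϕ (ϕ' x) x) (hϕx : ϕ x ≠ 0)
    (hw : HasDerivAt w (w' x) x) (hw' : HasDerivAt w' (w'' x) x)
    (hode : w'' x + ϕ x * w x = 0) :
    HasDerivAt (soninFunction ϕ w w') (-ϕ' x * w' x ^ 2 / ϕ x ^ 2) x := by
  have h := (hw.pow 2).add ((hϕ.inv hϕx).mul (hw'.pow 2))
  refine h.congr_deriv ?_
  simp only [Pi.pow_apply, Pi.inv_apply]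
  field_simp
  linear_combination (2 * w' x * ϕ x) * hode

variable {s : Set ℝ}

theorem continuousOn_soninFunction (hϕ : ∀ x ∈ s, HasDerivAt ϕ (ϕ' x) x)
    (hϕ0 : ∀ x ∈ s, ϕ x ≠ 0) (hw : ∀ x ∈ s, HasDerivAt w (w' x) x)
    (hw' : ∀ x ∈ s, HasDerivAt w' (w'' x) x) (hode : ∀ x ∈ s, w'' x + ϕ x * w x = 0) :
    ContinuousOn (soninFunction ϕ w w') s := fun x hx =>
  (hasDerivAt_soninFunction (hϕ x hx) (hϕ0 x hx) (hw x hx) (hw' x hx)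
    (hode x hx)).continuousAt.continuousWithinAt

theorem monotoneOn_soninFunction (hs : Convex ℝ s) (hϕ : ∀ x ∈ s, HasDerivAt ϕ (ϕ' x) x)
    (hϕ0 : ∀ x ∈ s, ϕ x ≠ 0) (hw : ∀ x ∈ s, HasDerivAt w (w' x) x)
    (hw' : ∀ x ∈ s, HasDerivAt w' (w'' x) x) (hode : ∀ x ∈ s, w'' x + ϕ x * w x = 0)
    (hϕ' : ∀ x ∈ s, ϕ' x ≤ 0) :
    MonotoneOn (soninFunction ϕ w w') s :=
  monotoneOn_of_hasDerivWithinAt_nonneg hs (continuousOn_soninFunction hϕ hϕ0 hw hw' hode)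
    (fun x hx => have hx := interior_subset hx
      (hasDerivAt_soninFunction (hϕ x hx) (hϕ0 x hx) (hw x hx) (hw' x hx)
        (hode x hx)).hasDerivWithinAt)
    (fun x hx => div_nonneg
      (mul_nonneg (neg_nonneg.mpr (hϕ' x (interior_subset hx))) (sq_nonneg _)) (sq_nonneg _))

theorem antitoneOn_soninFunction (hs : Convex ℝ s) (hϕ : ∀ x ∈ s, HasDerivAt ϕ (ϕ' x) x)
    (hϕ0 : ∀ x ∈ s, ϕ x ≠ 0) (hw : ∀ x ∈ s, HasDerivAt w (w' x) x)
    (hw' : ∀ x ∈ s, HasDerivAt w' (w'' x) x) (hode : ∀ x ∈ s, w'' x + ϕ x * w x = 0)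
    (hϕ' : ∀ x ∈ s, 0 ≤ ϕ' x) :
    AntitoneOn (soninFunction ϕ w w') s :=
  antitoneOn_of_hasDerivWithinAt_nonpos hs (continuousOn_soninFunction hϕ hϕ0 hw hw' hode)
    (fun x hx => have hx := interior_subset hx
      (hasDerivAt_soninFunction (hϕ x hx) (hϕ0 x hx) (hw x hx) (hw' x hx)
        (hode x hx)).hasDerivWithinAt)
    (fun x hx => div_nonpos_of_nonpos_of_nonneg
      (mul_nonpos_of_nonpos_of_nonneg (neg_nonpos.mpr (hϕ' x (interior_subset hx)))
        (sq_nonneg _)) (sq_nonneg _))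

end Sonin

theorem stmt_4_general (a b : ℝ)
    (ϕ ϕd uI uId uIdd uII uIId uIIdd : ℝ → ℝ)
    (hϕd : ∀ θ ∈ Set.Ioo a b, HasDerivAt ϕ (ϕd θ) θ)
    (hϕpos : ∀ θ ∈ Set.Ioo a b, 0 < ϕ θ)
    (huId : ∀ θ ∈ Set.Ioo a b, HasDerivAt uI (uId θ) θ)
    (huIdd : ∀ θ ∈ Set.Ioo a b, HasDerivAt uId (uIdd θ) θ)
    (huIId : ∀ θ ∈ Set.Ioo a b, HasDerivAt uII (uIId θ) θ)
    (huIIdd : ∀ θ ∈ Set.Ioo a b, HasDerivAt uIId (uIIdd θ) θ)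
    (hodeI : ∀ θ ∈ Set.Ioo a b, uIdd θ + ϕ θ * uI θ = 0)
    (hodeII : ∀ θ ∈ Set.Ioo a b, uIIdd θ + ϕ θ * uII θ = 0)
    (c : ℝ) (hc : c ∈ Set.Ioo a b)
    (hdec : ∀ θ ∈ Set.Ioc a c, ϕd θ ≤ 0)
    (hinc : ∀ θ ∈ Set.Ico c b, 0 ≤ ϕd θ) :
    ∀ θt ∈ Set.Ioo a b,
      MonotoneOn
        (fun t => (uI t * uII θt - uI θt * uII t) ^ 2
            + (ϕ t)⁻¹ * (uId t * uII θt - uI θt * uIId t) ^ 2)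
        (Set.Ioc a c) ∧
      AntitoneOn
        (fun t => (uI t * uII θt - uI θt * uII t) ^ 2
            + (ϕ t)⁻¹ * (uId t * uII θt - uI θt * uIId t) ^ 2)
        (Set.Ico c b) := by
  intro θt _
  have hϕ0 : ∀ θ ∈ Ioo a b, ϕ θ ≠ 0 := fun θ hθ => (hϕpos θ hθ).ne'
  have hw : ∀ θ ∈ Ioo a b, HasDerivAt (fun t => uI t * uII θt - uI θt * uII t)
      (uId θ * uII θt - uI θt * uIId θ) θ := fun θ hθ =>
    ((huId θ hθ).mul_const _).sub ((huIId θ hθ).const_mul _)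
  have hw' : ∀ θ ∈ Ioo a b, HasDerivAt (fun t => uId t * uII θt - uI θt * uIId t)
      (uIdd θ * uII θt - uI θt * uIIdd θ) θ := fun θ hθ =>
    ((huIdd θ hθ).mul_const _).sub ((huIIdd θ hθ).const_mul _)
  have hode : ∀ θ ∈ Ioo a b, (uIdd θ * uII θt - uI θt * uIIdd θ)
      + ϕ θ * (uI θ * uII θt - uI θt * uII θ) = 0 := fun θ hθ => by
    linear_combination uII θt * hodeI θ hθ - uI θt * hodeII θ hθ
  have hleft : Ioc a c ⊆ Ioo a b := Ioc_subset_Ioo_right hc.2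
  have hright : Ico c b ⊆ Ioo a b := Ico_subset_Ioo_left hc.1
  exact ⟨monotoneOn_soninFunction (convex_Ioc a c) (fun x hx => hϕd x (hleft hx))
      (fun x hx => hϕ0 x (hleft hx)) (fun x hx => hw x (hleft hx))
      (fun x hx => hw' x (hleft hx)) (fun x hx => hode x (hleft hx)) hdec,
    antitoneOn_soninFunction (convex_Ico c b) (fun x hx => hϕd x (hright hx))
      (fun x hx => hϕ0 x (hright hx)) (fun x hx => hw x (hright hx))
      (fun x hx => hw' x (hright hx)) (fun x hx => hode x (hright hx)) hinc⟩

/-- θ ↦ f₁(θ,θ̃) is non-decreasing on (a,c] and non-increasing on [c,b). -/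
theorem stmt_4 (a b : ℝ) (hab : a < b)
    (ϕ ϕd uI uId uIdd uII uIId uIIdd : ℝ → ℝ)
    (hϕd : ∀ θ ∈ Set.Ioo a b, HasDerivAt ϕ (ϕd θ) θ)
    (hϕdc : ContinuousOn ϕd (Set.Ioo a b))
    (hϕpos : ∀ θ ∈ Set.Ioo a b, 0 < ϕ θ)
    (huId : ∀ θ ∈ Set.Ioo a b, HasDerivAt uI (uId θ) θ)
    (huIdd : ∀ θ ∈ Set.Ioo a b, HasDerivAt uId (uIdd θ) θ)
    (huIId : ∀ θ ∈ Set.Ioo a b, HasDerivAt uII (uIId θ) θ)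
    (huIIdd : ∀ θ ∈ Set.Ioo a b, HasDerivAt uIId (uIIdd θ) θ)
    (hodeI : ∀ θ ∈ Set.Ioo a b, uIdd θ + ϕ θ * uI θ = 0)
    (hodeII : ∀ θ ∈ Set.Ioo a b, uIIdd θ + ϕ θ * uII θ = 0)
    (c : ℝ) (hc : c ∈ Set.Ioo a b)
    (hdec : ∀ θ ∈ Set.Ioc a c, ϕd θ ≤ 0)
    (hinc : ∀ θ ∈ Set.Ico c b, 0 ≤ ϕd θ) :
    ∀ θt ∈ Set.Ioo a b,
      MonotoneOn
        (fun t => (uI t * uII θt - uI θt * uII t) ^ 2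
            + (ϕ t)⁻¹ * (uId t * uII θt - uI θt * uIId t) ^ 2)
        (Set.Ioc a c) ∧
      AntitoneOn
        (fun t => (uI t * uII θt - uI θt * uII t) ^ 2
            + (ϕ t)⁻¹ * (uId t * uII θt - uI θt * uIId t) ^ 2)
        (Set.Ico c b) :=
  stmt_4_general a b ϕ ϕd uI uId uIdd uII uIId uIIdd hϕd hϕpos huId huIdd huIId huIIdd hodeI hodeII
    c hc hdec hinc
end

section
/- If in addition there exists c ∈ (a,b) such that ϕ'(θ) ≤ 0 for all θ ∈ (a,c] and ϕ'(θ) ≥ 0 for all θ ∈ [c,b), then for every fixed θ ∈ (a,b) the function θ̃ ↦ f₂(θ,θ̃) is monotone non-decreasing on (a,c] and monotone non-increasing on [c,b), where f₂(θ,θ̃) = v(θ,θ̃)² + ϕ(θ̃)⁻¹·(∂v/∂θ̃(θ,θ̃))² and ∂v/∂θ̃(θ,θ̃) = u_I(θ)·u_II'(θ̃) − u_I'(θ̃)·u_II(θ). -/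
/-!
If `v' = w` and `w' = -ϕ v`, then the energy `E = v² + w² / ϕ` has derivative
`E' = 2vw - ϕ' w² / ϕ² - 2vw = -ϕ' w² / ϕ²`, whose sign is opposite to that of `ϕ'`.
For fixed `θ`, the combination `t ↦ u_I(θ) u_II(t) - u_I(t) u_II(θ)` solves the same equation
`u'' + ϕ u = 0`, so `f₂(θ, ·)` is such an energy.
-/

open Set

section Energy

variable {ϕ ϕ' v w : ℝ → ℝ} {D : Set ℝ}

theorem hasDerivAt_energy {t ϕ't : ℝ} (hv : HasDerivAt v (w t) t)
    (hw : HasDerivAt w (-(ϕ t * v t)) t) (hϕ : HasDerivAt ϕ ϕ't t) (hϕt : ϕ t ≠ 0) :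
    HasDerivAt (fun s => v s ^ 2 + (ϕ s)⁻¹ * w s ^ 2) (-ϕ't * w t ^ 2 / ϕ t ^ 2) t := by
  refine ((hv.pow 2).add ((hϕ.inv hϕt).mul (hw.pow 2))).congr_deriv ?_
  simp only [Pi.pow_apply, Pi.inv_apply]
  field_simp
  ring

theorem monotoneOn_energy (hD : Convex ℝ D) (hv : ∀ t ∈ D, HasDerivAt v (w t) t)
    (hw : ∀ t ∈ D, HasDerivAt w (-(ϕ t * v t)) t) (hϕ : ∀ t ∈ D, HasDerivAt ϕ (ϕ' t) t)
    (hϕ0 : ∀ t ∈ D, ϕ t ≠ 0) (hϕ' : ∀ t ∈ D, ϕ' t ≤ 0) :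
    MonotoneOn (fun s => v s ^ 2 + (ϕ s)⁻¹ * w s ^ 2) D := by
  have hE t (ht : t ∈ D) := hasDerivAt_energy (hv t ht) (hw t ht) (hϕ t ht) (hϕ0 t ht)
  refine monotoneOn_of_hasDerivWithinAt_nonneg hD
    (fun t ht => (hE t ht).continuousAt.continuousWithinAt)
    (fun t ht => (hE t (interior_subset ht)).hasDerivWithinAt) fun t ht => ?_
  rw [neg_mul, neg_div, neg_nonneg]
  exact div_nonpos_of_nonpos_of_nonneg
    (mul_nonpos_of_nonpos_of_nonneg (hϕ' t (interior_subset ht)) (sq_nonneg _)) (sq_nonneg _)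

theorem antitoneOn_energy (hD : Convex ℝ D) (hv : ∀ t ∈ D, HasDerivAt v (w t) t)
    (hw : ∀ t ∈ D, HasDerivAt w (-(ϕ t * v t)) t) (hϕ : ∀ t ∈ D, HasDerivAt ϕ (ϕ' t) t)
    (hϕ0 : ∀ t ∈ D, ϕ t ≠ 0) (hϕ' : ∀ t ∈ D, 0 ≤ ϕ' t) :
    AntitoneOn (fun s => v s ^ 2 + (ϕ s)⁻¹ * w s ^ 2) D := by
  have hE t (ht : t ∈ D) := hasDerivAt_energy (hv t ht) (hw t ht) (hϕ t ht) (hϕ0 t ht)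
  refine antitoneOn_of_hasDerivWithinAt_nonpos hD
    (fun t ht => (hE t ht).continuousAt.continuousWithinAt)
    (fun t ht => (hE t (interior_subset ht)).hasDerivWithinAt) fun t ht => ?_
  rw [neg_mul, neg_div, neg_nonpos]
  exact div_nonneg (mul_nonneg (hϕ' t (interior_subset ht)) (sq_nonneg _)) (sq_nonneg _)

end Energy

theorem stmt_5_general (a b : ℝ)
    (ϕ ϕd uI uId uIdd uII uIId uIIdd : ℝ → ℝ)
    (hϕd : ∀ θ ∈ Set.Ioo a b, HasDerivAt ϕ (ϕd θ) θ)
    (hϕpos : ∀ θ ∈ Set.Ioo a b, 0 < ϕ θ)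
    (huId : ∀ θ ∈ Set.Ioo a b, HasDerivAt uI (uId θ) θ)
    (huIdd : ∀ θ ∈ Set.Ioo a b, HasDerivAt uId (uIdd θ) θ)
    (huIId : ∀ θ ∈ Set.Ioo a b, HasDerivAt uII (uIId θ) θ)
    (huIIdd : ∀ θ ∈ Set.Ioo a b, HasDerivAt uIId (uIIdd θ) θ)
    (hodeI : ∀ θ ∈ Set.Ioo a b, uIdd θ + ϕ θ * uI θ = 0)
    (hodeII : ∀ θ ∈ Set.Ioo a b, uIIdd θ + ϕ θ * uII θ = 0)
    (c : ℝ) (hc : c ∈ Set.Ioo a b)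
    (hdec : ∀ θ ∈ Set.Ioc a c, ϕd θ ≤ 0)
    (hinc : ∀ θ ∈ Set.Ico c b, 0 ≤ ϕd θ) :
    ∀ θ ∈ Set.Ioo a b,
      MonotoneOn
        (fun t => (uI θ * uII t - uI t * uII θ) ^ 2
            + (ϕ t)⁻¹ * (uI θ * uIId t - uId t * uII θ) ^ 2)
        (Set.Ioc a c) ∧
      AntitoneOn
        (fun t => (uI θ * uII t - uI t * uII θ) ^ 2
            + (ϕ t)⁻¹ * (uI θ * uIId t - uId t * uII θ) ^ 2)
        (Set.Ico c b) := by
  intro θ _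
  have hv : ∀ t ∈ Ioo a b, HasDerivAt (fun s => uI θ * uII s - uI s * uII θ)
      (uI θ * uIId t - uId t * uII θ) t := fun t ht =>
    ((huIId t ht).const_mul _).sub ((huId t ht).mul_const _)
  have hw : ∀ t ∈ Ioo a b, HasDerivAt (fun s => uI θ * uIId s - uId s * uII θ)
      (-(ϕ t * (uI θ * uII t - uI t * uII θ))) t := by
    intro t ht
    refine (((huIIdd t ht).const_mul (uI θ)).sub ((huIdd t ht).mul_const (uII θ))).congr_deriv ?_
    linear_combination uI θ * hodeII t ht - uII θ * hodeI t ht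
  have hϕ0 t (ht : t ∈ Ioo a b) := (hϕpos t ht).ne'
  have hleft : Ioc a c ⊆ Ioo a b := Ioc_subset_Ioo_right hc.2
  have hright : Ico c b ⊆ Ioo a b := Ico_subset_Ioo_left hc.1
  exact ⟨monotoneOn_energy (convex_Ioc a c) (fun t ht => hv t (hleft ht))
      (fun t ht => hw t (hleft ht)) (fun t ht => hϕd t (hleft ht)) (fun t ht => hϕ0 t (hleft ht))
      hdec,
    antitoneOn_energy (convex_Ico c b) (fun t ht => hv t (hright ht))
      (fun t ht => hw t (hright ht)) (fun t ht => hϕd t (hright ht))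
      (fun t ht => hϕ0 t (hright ht)) hinc⟩

/-- θ̃ ↦ f₂(θ,θ̃) is non-decreasing on (a,c] and non-increasing on [c,b). -/
theorem stmt_5 (a b : ℝ) (hab : a < b)
    (ϕ ϕd uI uId uIdd uII uIId uIIdd : ℝ → ℝ)
    (hϕd : ∀ θ ∈ Set.Ioo a b, HasDerivAt ϕ (ϕd θ) θ)
    (hϕdc : ContinuousOn ϕd (Set.Ioo a b))
    (hϕpos : ∀ θ ∈ Set.Ioo a b, 0 < ϕ θ)
    (huId : ∀ θ ∈ Set.Ioo a b, HasDerivAt uI (uId θ) θ)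
    (huIdd : ∀ θ ∈ Set.Ioo a b, HasDerivAt uId (uIdd θ) θ)
    (huIId : ∀ θ ∈ Set.Ioo a b, HasDerivAt uII (uIId θ) θ)
    (huIIdd : ∀ θ ∈ Set.Ioo a b, HasDerivAt uIId (uIIdd θ) θ)
    (hodeI : ∀ θ ∈ Set.Ioo a b, uIdd θ + ϕ θ * uI θ = 0)
    (hodeII : ∀ θ ∈ Set.Ioo a b, uIIdd θ + ϕ θ * uII θ = 0)
    (c : ℝ) (hc : c ∈ Set.Ioo a b)
    (hdec : ∀ θ ∈ Set.Ioc a c, ϕd θ ≤ 0)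
    (hinc : ∀ θ ∈ Set.Ico c b, 0 ≤ ϕd θ) :
    ∀ θ ∈ Set.Ioo a b,
      MonotoneOn
        (fun t => (uI θ * uII t - uI t * uII θ) ^ 2
            + (ϕ t)⁻¹ * (uI θ * uIId t - uId t * uII θ) ^ 2)
        (Set.Ioc a c) ∧
      AntitoneOn
        (fun t => (uI θ * uII t - uI t * uII θ) ^ 2
            + (ϕ t)⁻¹ * (uI θ * uIId t - uId t * uII θ) ^ 2)
        (Set.Ico c b) :=
  stmt_5_general a b ϕ ϕd uI uId uIdd uII uIId uIIdd hϕd hϕpos huId huIdd huIId huIIdd hodeI hodeII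
    c hc hdec hinc
end

section
/- If in addition there exists c ∈ (a,b) such that ϕ'(θ) ≤ 0 for all θ ∈ (a,c] and ϕ'(θ) ≥ 0 for all θ ∈ [c,b), then v(θ,θ̃)² ≤ 1/ϕ(c) for all θ, θ̃ ∈ (a,c]. -/
/-!
For a solution `w` of `w'' + ϕ w = 0` the energy `w² + w'²/ϕ` has derivative `-w'² ϕ'/ϕ²`, so it
is nondecreasing wherever `ϕ` is nonincreasing. For `θ ≤ θ̃` in `(a, c]` take `w = v(·, θ̃)`: then
`w(θ̃) = 0` and, by the Wronskian normalization, `w'(θ̃) = -1`, whence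
`v(θ, θ̃)² ≤ E(θ) ≤ E(θ̃) = 1/ϕ(θ̃) ≤ 1/ϕ(c)`.
-/

open Set

theorem Convex.monotoneOn_of_hasDerivAt_nonneg {D : Set ℝ} (hD : Convex ℝ D) {f f' : ℝ → ℝ}
    (hf : ∀ x ∈ D, HasDerivAt f (f' x) x) (hf'₀ : ∀ x ∈ interior D, 0 ≤ f' x) :
    MonotoneOn f D :=
  monotoneOn_of_hasDerivWithinAt_nonneg hD
    (fun x hx => (hf x hx).continuousAt.continuousWithinAt)
    (fun x hx => (hf x (interior_subset hx)).hasDerivWithinAt) hf'₀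

theorem Convex.antitoneOn_of_hasDerivAt_nonpos {D : Set ℝ} (hD : Convex ℝ D) {f f' : ℝ → ℝ}
    (hf : ∀ x ∈ D, HasDerivAt f (f' x) x) (hf'₀ : ∀ x ∈ interior D, f' x ≤ 0) :
    AntitoneOn f D :=
  antitoneOn_of_hasDerivWithinAt_nonpos hD
    (fun x hx => (hf x hx).continuousAt.continuousWithinAt)
    (fun x hx => (hf x (interior_subset hx)).hasDerivWithinAt) hf'₀

section OscillationEnergy

variable {ϕ ϕ' w w' : ℝ → ℝ}

noncomputable def oscillationEnergy (ϕ w w' : ℝ → ℝ) (x : ℝ) : ℝ :=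
  w x ^ 2 + w' x ^ 2 / ϕ x

theorem sq_le_oscillationEnergy {x : ℝ} (hϕx : 0 ≤ ϕ x) : w x ^ 2 ≤ oscillationEnergy ϕ w w' x :=
  le_add_of_nonneg_right (div_nonneg (sq_nonneg _) hϕx)

theorem hasDerivAt_oscillationEnergy {x ϕ'x : ℝ} (hw : HasDerivAt w (w' x) x)
    (hw' : HasDerivAt w' (-(ϕ x * w x)) x) (hϕ : HasDerivAt ϕ ϕ'x x) (hϕx : ϕ x ≠ 0) :
    HasDerivAt (oscillationEnergy ϕ w w') (-(w' x ^ 2 * ϕ'x / ϕ x ^ 2)) x := by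
  have h := (hw.fun_pow 2).add ((hw'.fun_pow 2).div hϕ hϕx)
  refine h.congr_deriv ?_
  field_simp
  ring

theorem Convex.monotoneOn_oscillationEnergy {D : Set ℝ} (hD : Convex ℝ D)
    (hw : ∀ x ∈ D, HasDerivAt w (w' x) x) (hw' : ∀ x ∈ D, HasDerivAt w' (-(ϕ x * w x)) x)
    (hϕ : ∀ x ∈ D, HasDerivAt ϕ (ϕ' x) x) (hϕpos : ∀ x ∈ D, 0 < ϕ x)
    (hϕ'_nonpos : ∀ x ∈ interior D, ϕ' x ≤ 0) :
    MonotoneOn (oscillationEnergy ϕ w w') D :=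
  hD.monotoneOn_of_hasDerivAt_nonneg
    (fun x hx => hasDerivAt_oscillationEnergy (hw x hx) (hw' x hx) (hϕ x hx) (hϕpos x hx).ne')
    fun x hx => neg_nonneg.2 <| div_nonpos_of_nonpos_of_nonneg
      (mul_nonpos_of_nonneg_of_nonpos (sq_nonneg _) (hϕ'_nonpos x hx)) (sq_nonneg _)

end OscillationEnergy

theorem stmt_6_general (a b : ℝ)
    (ϕ ϕd uI uId uIdd uII uIId uIIdd : ℝ → ℝ)
    (hϕd : ∀ θ ∈ Set.Ioo a b, HasDerivAt ϕ (ϕd θ) θ)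
    (hϕpos : ∀ θ ∈ Set.Ioo a b, 0 < ϕ θ)
    (huId : ∀ θ ∈ Set.Ioo a b, HasDerivAt uI (uId θ) θ)
    (huIdd : ∀ θ ∈ Set.Ioo a b, HasDerivAt uId (uIdd θ) θ)
    (huIId : ∀ θ ∈ Set.Ioo a b, HasDerivAt uII (uIId θ) θ)
    (huIIdd : ∀ θ ∈ Set.Ioo a b, HasDerivAt uIId (uIIdd θ) θ)
    (hodeI : ∀ θ ∈ Set.Ioo a b, uIdd θ + ϕ θ * uI θ = 0)
    (hodeII : ∀ θ ∈ Set.Ioo a b, uIIdd θ + ϕ θ * uII θ = 0)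
    (hW : ∀ θ ∈ Set.Ioo a b, uI θ * uIId θ - uId θ * uII θ = 1)
    (c : ℝ) (hc : c ∈ Set.Ioo a b)
    (hdec : ∀ θ ∈ Set.Ioc a c, ϕd θ ≤ 0) :
    ∀ θ ∈ Set.Ioc a c, ∀ θt ∈ Set.Ioc a c,
      (uI θ * uII θt - uI θt * uII θ) ^ 2 ≤ 1 / ϕ c := by
  intro θ hθ θt hθt
  wlog hle : θ ≤ θt generalizing θ θt
  · rw [← neg_sq, neg_sub]
    exact this θt hθt θ hθ (le_of_not_ge hle)
  have hsub : Ioc a c ⊆ Ioo a b := fun x hx => ⟨hx.1, hx.2.trans_lt hc.2⟩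
  set w := fun x => uI x * uII θt - uI θt * uII x
  set w' := fun x => uId x * uII θt - uI θt * uIId x
  have hw : ∀ x ∈ Ioc a c, HasDerivAt w (w' x) x := fun x hx =>
    ((huId x (hsub hx)).mul_const _).sub ((huIId x (hsub hx)).const_mul _)
  have hw' : ∀ x ∈ Ioc a c, HasDerivAt w' (-(ϕ x * w x)) x := fun x hx =>
    (((huIdd x (hsub hx)).mul_const _).sub ((huIIdd x (hsub hx)).const_mul _)).congr_deriv <| by
      linear_combination uII θt * hodeI x (hsub hx) - uI θt * hodeII x (hsub hx)
  have hE : oscillationEnergy ϕ w w' θt = 1 / ϕ θt := by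
    have hw'θt : w' θt = -1 := by linear_combination -hW θt (hsub hθt)
    simp [oscillationEnergy, w, hw'θt]
  have hϕc : ϕ c ≤ ϕ θt :=
    (convex_Ioc a c).antitoneOn_of_hasDerivAt_nonpos (fun x hx => hϕd x (hsub hx))
      (fun x hx => hdec x (interior_subset hx)) hθt ⟨hc.1, le_rfl⟩ hθt.2
  calc w θ ^ 2 ≤ oscillationEnergy ϕ w w' θ := sq_le_oscillationEnergy (hϕpos θ (hsub hθ)).le
    _ ≤ oscillationEnergy ϕ w w' θt :=
      (convex_Ioc a c).monotoneOn_oscillationEnergy hw hw' (fun x hx => hϕd x (hsub hx))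
        (fun x hx => hϕpos x (hsub hx)) (fun x hx => hdec x (interior_subset hx)) hθ hθt hle
    _ = 1 / ϕ θt := hE
    _ ≤ 1 / ϕ c := one_div_le_one_div_of_le (hϕpos c hc) hϕc

/-- v(θ,θ̃)² ≤ 1/ϕ(c) for all θ, θ̃ ∈ (a,c]. -/
theorem stmt_6 (a b : ℝ) (hab : a < b)
    (ϕ ϕd uI uId uIdd uII uIId uIIdd : ℝ → ℝ)
    (hϕd : ∀ θ ∈ Set.Ioo a b, HasDerivAt ϕ (ϕd θ) θ)
    (hϕdc : ContinuousOn ϕd (Set.Ioo a b))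
    (hϕpos : ∀ θ ∈ Set.Ioo a b, 0 < ϕ θ)
    (huId : ∀ θ ∈ Set.Ioo a b, HasDerivAt uI (uId θ) θ)
    (huIdd : ∀ θ ∈ Set.Ioo a b, HasDerivAt uId (uIdd θ) θ)
    (huIId : ∀ θ ∈ Set.Ioo a b, HasDerivAt uII (uIId θ) θ)
    (huIIdd : ∀ θ ∈ Set.Ioo a b, HasDerivAt uIId (uIIdd θ) θ)
    (hodeI : ∀ θ ∈ Set.Ioo a b, uIdd θ + ϕ θ * uI θ = 0)
    (hodeII : ∀ θ ∈ Set.Ioo a b, uIIdd θ + ϕ θ * uII θ = 0)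
    (hW : ∀ θ ∈ Set.Ioo a b, uI θ * uIId θ - uId θ * uII θ = 1)
    (c : ℝ) (hc : c ∈ Set.Ioo a b)
    (hdec : ∀ θ ∈ Set.Ioc a c, ϕd θ ≤ 0)
    (hinc : ∀ θ ∈ Set.Ico c b, 0 ≤ ϕd θ) :
    ∀ θ ∈ Set.Ioc a c, ∀ θt ∈ Set.Ioc a c,
      (uI θ * uII θt - uI θt * uII θ) ^ 2 ≤ 1 / ϕ c :=
  stmt_6_general a b ϕ ϕd uI uId uIdd uII uIId uIIdd hϕd hϕpos huId huIdd huIId huIIdd hodeI hodeII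
    hW c hc hdec
end

section
/- If in addition there exists c ∈ (a,b) such that ϕ'(θ) ≤ 0 for all θ ∈ (a,c] and ϕ'(θ) ≥ 0 for all θ ∈ [c,b), then v(θ,θ̃)² ≤ 1/ϕ(c) for all θ, θ̃ ∈ [c,b). -/
/-!
Along a solution `w` of `w'' + ϕ w = 0` the energy `w'² / ϕ + w²` has derivative `-ϕ' w'² / ϕ²`,
so it does not increase where `ϕ` increases. For `θ̃ ≤ θ` in `[c, b)` the function `w = v(·, θ̃)`
solves the equation with `w(θ̃) = 0` and, by the Wronskian normalization, `w'(θ̃) = -1`. Hence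
`v(θ, θ̃)² ≤ E(θ) ≤ E(θ̃) = 1 / ϕ(θ̃) ≤ 1 / ϕ(c)`, the last step because `ϕ` increases on `[c, b)`.
The case `θ < θ̃` follows from the antisymmetry of `v`.
-/

open Set

section Energy

variable {s : Set ℝ} {ϕ ϕ' w w' : ℝ → ℝ}

theorem hasDerivAt_energy_s7 {x : ℝ} (hw : HasDerivAt w (w' x) x)
    (hw' : HasDerivAt w' (-(ϕ x * w x)) x) (hϕ : HasDerivAt ϕ (ϕ' x) x) (hϕx : ϕ x ≠ 0) :
    HasDerivAt (fun y => w' y ^ 2 / ϕ y + w y ^ 2) (-(ϕ' x * w' x ^ 2 / ϕ x ^ 2)) x := by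
  refine (((hw'.pow 2).div hϕ hϕx).add (hw.pow 2)).congr_deriv ?_
  simp only [Pi.pow_apply]
  field_simp
  ring

theorem antitoneOn_energy_s7 (hs : Convex ℝ s) (hw : ∀ x ∈ s, HasDerivAt w (w' x) x)
    (hw' : ∀ x ∈ s, HasDerivAt w' (-(ϕ x * w x)) x) (hϕ : ∀ x ∈ s, HasDerivAt ϕ (ϕ' x) x)
    (hϕpos : ∀ x ∈ s, 0 < ϕ x) (hϕ' : ∀ x ∈ s, 0 ≤ ϕ' x) :
    AntitoneOn (fun y => w' y ^ 2 / ϕ y + w y ^ 2) s := by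
  have hE : ∀ x ∈ s, HasDerivAt (fun y => w' y ^ 2 / ϕ y + w y ^ 2)
      (-(ϕ' x * w' x ^ 2 / ϕ x ^ 2)) x := fun x hx =>
    hasDerivAt_energy_s7 (hw x hx) (hw' x hx) (hϕ x hx) (hϕpos x hx).ne'
  refine antitoneOn_of_hasDerivWithinAt_nonpos hs
    (fun x hx => (hE x hx).continuousAt.continuousWithinAt)
    (fun x hx => (hE x (interior_subset hx)).hasDerivWithinAt) fun x hx => ?_
  exact neg_nonpos.2 <|
    div_nonneg (mul_nonneg (hϕ' x (interior_subset hx)) (sq_nonneg _)) (sq_nonneg _)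

theorem sq_le_sq_deriv_div_of_eq_zero (hs : Convex ℝ s) (hw : ∀ x ∈ s, HasDerivAt w (w' x) x)
    (hw' : ∀ x ∈ s, HasDerivAt w' (-(ϕ x * w x)) x) (hϕ : ∀ x ∈ s, HasDerivAt ϕ (ϕ' x) x)
    (hϕpos : ∀ x ∈ s, 0 < ϕ x) (hϕ' : ∀ x ∈ s, 0 ≤ ϕ' x) {x₀ x : ℝ} (hx₀ : x₀ ∈ s)
    (hx : x ∈ s) (hle : x₀ ≤ x) (hw₀ : w x₀ = 0) :
    w x ^ 2 ≤ w' x₀ ^ 2 / ϕ x₀ :=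
  calc w x ^ 2 ≤ w' x ^ 2 / ϕ x + w x ^ 2 :=
        le_add_of_nonneg_left (div_nonneg (sq_nonneg _) (hϕpos x hx).le)
    _ ≤ w' x₀ ^ 2 / ϕ x₀ + w x₀ ^ 2 := antitoneOn_energy_s7 hs hw hw' hϕ hϕpos hϕ' hx₀ hx hle
    _ = w' x₀ ^ 2 / ϕ x₀ := by rw [hw₀, zero_pow two_ne_zero, add_zero]

end Energy

theorem hasDerivAt_mul_const_sub_const_mul_of_ode {ϕ u₁ u₁' u₁'' u₂ u₂' u₂'' : ℝ → ℝ} (p q : ℝ) {x : ℝ}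
    (h₁ : HasDerivAt u₁' (u₁'' x) x) (h₂ : HasDerivAt u₂' (u₂'' x) x)
    (ode₁ : u₁'' x + ϕ x * u₁ x = 0) (ode₂ : u₂'' x + ϕ x * u₂ x = 0) :
    HasDerivAt (fun y => u₁' y * p - q * u₂' y) (-(ϕ x * (u₁ x * p - q * u₂ x))) x := by
  refine ((h₁.mul_const p).sub (h₂.const_mul q)).congr_deriv ?_
  linear_combination p * ode₁ - q * ode₂

theorem stmt_7_general (a b : ℝ)
    (ϕ ϕd uI uId uIdd uII uIId uIIdd : ℝ → ℝ)
    (hϕd : ∀ θ ∈ Set.Ioo a b, HasDerivAt ϕ (ϕd θ) θ)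
    (hϕpos : ∀ θ ∈ Set.Ioo a b, 0 < ϕ θ)
    (huId : ∀ θ ∈ Set.Ioo a b, HasDerivAt uI (uId θ) θ)
    (huIdd : ∀ θ ∈ Set.Ioo a b, HasDerivAt uId (uIdd θ) θ)
    (huIId : ∀ θ ∈ Set.Ioo a b, HasDerivAt uII (uIId θ) θ)
    (huIIdd : ∀ θ ∈ Set.Ioo a b, HasDerivAt uIId (uIIdd θ) θ)
    (hodeI : ∀ θ ∈ Set.Ioo a b, uIdd θ + ϕ θ * uI θ = 0)
    (hodeII : ∀ θ ∈ Set.Ioo a b, uIIdd θ + ϕ θ * uII θ = 0)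
    (hW : ∀ θ ∈ Set.Ioo a b, uI θ * uIId θ - uId θ * uII θ = 1)
    (c : ℝ) (hc : c ∈ Set.Ioo a b)
    (hinc : ∀ θ ∈ Set.Ico c b, 0 ≤ ϕd θ) :
    ∀ θ ∈ Set.Ico c b, ∀ θt ∈ Set.Ico c b,
      (uI θ * uII θt - uI θt * uII θ) ^ 2 ≤ 1 / ϕ c := by
  have hsub : Ico c b ⊆ Ioo a b := fun x hx => ⟨hc.1.trans_le hx.1, hx.2⟩
  have hϕmono : MonotoneOn ϕ (Ico c b) :=
    monotoneOn_of_hasDerivWithinAt_nonneg (convex_Ico c b)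
      (fun x hx => (hϕd x (hsub hx)).continuousAt.continuousWithinAt)
      (fun x hx => (hϕd x (hsub (interior_subset hx))).hasDerivWithinAt)
      fun x hx => hinc x (interior_subset hx)
  have key : ∀ θt ∈ Ico c b, ∀ θ ∈ Ico c b, θt ≤ θ →
      (uI θ * uII θt - uI θt * uII θ) ^ 2 ≤ 1 / ϕ c := by
    intro θt hθt θ hθ hle
    have hbound := sq_le_sq_deriv_div_of_eq_zero (convex_Ico c b)
      (w := fun x => uI x * uII θt - uI θt * uII x)
      (fun x hx => ((huId x (hsub hx)).mul_const _).sub ((huIId x (hsub hx)).const_mul _))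
      (fun x hx => hasDerivAt_mul_const_sub_const_mul_of_ode _ _ (huIdd x (hsub hx)) (huIIdd x (hsub hx))
        (hodeI x (hsub hx)) (hodeII x (hsub hx)))
      (fun x hx => hϕd x (hsub hx)) (fun x hx => hϕpos x (hsub hx)) hinc hθt hθ hle
      (by ring)
    have hW₀ : (uId θt * uII θt - uI θt * uIId θt) ^ 2 = 1 := by
      linear_combination (uI θt * uIId θt - uId θt * uII θt + 1) * hW θt (hsub hθt)
    calc _ ≤ 1 / ϕ θt := hW₀ ▸ hbound
      _ ≤ 1 / ϕ c := one_div_le_one_div_of_le (hϕpos c hc) (hϕmono ⟨le_rfl, hc.2⟩ hθt hθt.1)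
  intro θ hθ θt hθt
  rcases le_total θt θ with h | h
  · exact key θt hθt θ hθ h
  · calc _ = (uI θt * uII θ - uI θ * uII θt) ^ 2 := by ring
      _ ≤ 1 / ϕ c := key θ hθ θt hθt h

/-- v(θ,θ̃)² ≤ 1/ϕ(c) for all θ, θ̃ ∈ [c,b). -/
theorem stmt_7 (a b : ℝ) (hab : a < b)
    (ϕ ϕd uI uId uIdd uII uIId uIIdd : ℝ → ℝ)
    (hϕd : ∀ θ ∈ Set.Ioo a b, HasDerivAt ϕ (ϕd θ) θ)
    (hϕdc : ContinuousOn ϕd (Set.Ioo a b))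
    (hϕpos : ∀ θ ∈ Set.Ioo a b, 0 < ϕ θ)
    (huId : ∀ θ ∈ Set.Ioo a b, HasDerivAt uI (uId θ) θ)
    (huIdd : ∀ θ ∈ Set.Ioo a b, HasDerivAt uId (uIdd θ) θ)
    (huIId : ∀ θ ∈ Set.Ioo a b, HasDerivAt uII (uIId θ) θ)
    (huIIdd : ∀ θ ∈ Set.Ioo a b, HasDerivAt uIId (uIIdd θ) θ)
    (hodeI : ∀ θ ∈ Set.Ioo a b, uIdd θ + ϕ θ * uI θ = 0)
    (hodeII : ∀ θ ∈ Set.Ioo a b, uIIdd θ + ϕ θ * uII θ = 0)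
    (hW : ∀ θ ∈ Set.Ioo a b, uI θ * uIId θ - uId θ * uII θ = 1)
    (c : ℝ) (hc : c ∈ Set.Ioo a b)
    (hdec : ∀ θ ∈ Set.Ioc a c, ϕd θ ≤ 0)
    (hinc : ∀ θ ∈ Set.Ico c b, 0 ≤ ϕd θ) :
    ∀ θ ∈ Set.Ico c b, ∀ θt ∈ Set.Ico c b,
      (uI θ * uII θt - uI θt * uII θ) ^ 2 ≤ 1 / ϕ c :=
  stmt_7_general a b ϕ ϕd uI uId uIdd uII uIId uIIdd hϕd hϕpos huId huIdd huIId huIIdd hodeI hodeII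
    hW c hc hinc
end

section
/- If in addition there exists c ∈ (a,b) such that ϕ'(θ) ≤ 0 for all θ ∈ (a,c] and ϕ'(θ) ≥ 0 for all θ ∈ [c,b), then v(θ,θ̃)² ≤ (1/ϕ(c))·(1 + w(θ̃)²) for all θ, θ̃ ∈ (a,b), where w(θ̃) = u_I'(c)·u_II(θ̃) − u_I(θ̃)·u_II'(c). -/
/-!
For a solution `f` of `f'' + ϕ f = 0` with `ϕ > 0`, the energy `f² + f'² / ϕ` has derivative
`-f'² ϕ' / ϕ²`, so it increases while `ϕ` decreases and decreases while `ϕ` increases: it is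
maximal at the minimum point `c` of `ϕ`. Both `θ ↦ v(θ, θ̃)` and `θ̃ ↦ v(c, θ̃)` are solutions.
The first gives `v(θ, θ̃)² ≤ v(c, θ̃)² + w(θ̃)² / ϕ(c)`; for the second, `v(c, c) = 0` and the
Wronskian normalisation make the energy at `c` equal to `1 / ϕ(c)`, so `v(c, θ̃)² ≤ 1 / ϕ(c)`.
-/

open Set

lemma isMaxOn_of_hasDerivAt_nonneg_of_nonpos {f f' : ℝ → ℝ} {a b c : ℝ}
    (hf : ∀ x ∈ Ioo a b, HasDerivAt f (f' x) x) (hc : c ∈ Ioo a b)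
    (hleft : ∀ x ∈ Ioc a c, 0 ≤ f' x) (hright : ∀ x ∈ Ico c b, f' x ≤ 0) :
    IsMaxOn f (Ioo a b) c := by
  have hcont : ContinuousOn f (Ioo a b) := fun x hx => (hf x hx).continuousAt.continuousWithinAt
  have hmono : MonotoneOn f (Ioc a c) := by
    refine monotoneOn_of_hasDerivWithinAt_nonneg (f' := f') (convex_Ioc a c)
      (hcont.mono (Ioc_subset_Ioo_right hc.2)) (fun x hx => ?_) (fun x hx => ?_)
    all_goals rw [interior_Ioc] at hx
    · exact (hf x ⟨hx.1, hx.2.trans hc.2⟩).hasDerivWithinAt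
    · exact hleft x (Ioo_subset_Ioc_self hx)
  have hanti : AntitoneOn f (Ico c b) := by
    refine antitoneOn_of_hasDerivWithinAt_nonpos (f' := f') (convex_Ico c b)
      (hcont.mono (Ico_subset_Ioo_left hc.1)) (fun x hx => ?_) (fun x hx => ?_)
    all_goals rw [interior_Ico] at hx
    · exact (hf x ⟨hc.1.trans hx.1, hx.2⟩).hasDerivWithinAt
    · exact hright x (Ioo_subset_Ico_self hx)
  intro x hx
  rcases le_total x c with hxc | hcx
  · exact hmono ⟨hx.1, hxc⟩ ⟨hc.1, le_rfl⟩ hxc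
  · exact hanti ⟨le_rfl, hc.2⟩ ⟨hcx, hx.2⟩ hcx

section Energy

variable {a b : ℝ} {ϕ ϕd f fd fdd : ℝ → ℝ}

lemma hasDerivAt_energy_s9 {θ : ℝ} (hϕ : HasDerivAt ϕ (ϕd θ) θ) (hϕpos : 0 < ϕ θ)
    (hf : HasDerivAt f (fd θ) θ) (hfd : HasDerivAt fd (fdd θ) θ)
    (hode : fdd θ + ϕ θ * f θ = 0) :
    HasDerivAt (fun s => f s ^ 2 + fd s ^ 2 / ϕ s) (-fd θ ^ 2 * ϕd θ / ϕ θ ^ 2) θ := by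
  refine ((hf.fun_pow 2).add ((hfd.fun_pow 2).fun_div hϕ hϕpos.ne')).congr_deriv ?_
  rw [show fdd θ = -(ϕ θ * f θ) by linarith]
  field_simp
  ring

lemma energy_le_energy_of_ode {c : ℝ}
    (hϕ : ∀ θ ∈ Ioo a b, HasDerivAt ϕ (ϕd θ) θ) (hϕpos : ∀ θ ∈ Ioo a b, 0 < ϕ θ)
    (hf : ∀ θ ∈ Ioo a b, HasDerivAt f (fd θ) θ) (hfd : ∀ θ ∈ Ioo a b, HasDerivAt fd (fdd θ) θ)
    (hode : ∀ θ ∈ Ioo a b, fdd θ + ϕ θ * f θ = 0) (hc : c ∈ Ioo a b)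
    (hdec : ∀ θ ∈ Ioc a c, ϕd θ ≤ 0) (hinc : ∀ θ ∈ Ico c b, 0 ≤ ϕd θ) {θ : ℝ}
    (hθ : θ ∈ Ioo a b) :
    f θ ^ 2 + fd θ ^ 2 / ϕ θ ≤ f c ^ 2 + fd c ^ 2 / ϕ c := by
  refine isMaxOn_of_hasDerivAt_nonneg_of_nonpos
    (fun x hx => hasDerivAt_energy_s9 (hϕ x hx) (hϕpos x hx) (hf x hx) (hfd x hx) (hode x hx))
    hc (fun x hx => ?_) (fun x hx => ?_) hθ
  · exact div_nonneg (mul_nonneg_of_nonpos_of_nonpos (neg_nonpos.2 (sq_nonneg _)) (hdec x hx))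
      (sq_nonneg _)
  · exact div_nonpos_of_nonpos_of_nonneg
      (mul_nonpos_of_nonpos_of_nonneg (neg_nonpos.2 (sq_nonneg _)) (hinc x hx)) (sq_nonneg _)

lemma sq_le_energy_of_ode {c : ℝ}
    (hϕ : ∀ θ ∈ Ioo a b, HasDerivAt ϕ (ϕd θ) θ) (hϕpos : ∀ θ ∈ Ioo a b, 0 < ϕ θ)
    (hf : ∀ θ ∈ Ioo a b, HasDerivAt f (fd θ) θ) (hfd : ∀ θ ∈ Ioo a b, HasDerivAt fd (fdd θ) θ)
    (hode : ∀ θ ∈ Ioo a b, fdd θ + ϕ θ * f θ = 0) (hc : c ∈ Ioo a b)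
    (hdec : ∀ θ ∈ Ioc a c, ϕd θ ≤ 0) (hinc : ∀ θ ∈ Ico c b, 0 ≤ ϕd θ) {θ : ℝ}
    (hθ : θ ∈ Ioo a b) :
    f θ ^ 2 ≤ f c ^ 2 + fd c ^ 2 / ϕ c := by
  have := energy_le_energy_of_ode hϕ hϕpos hf hfd hode hc hdec hinc hθ
  have := div_nonneg (sq_nonneg (fd θ)) (hϕpos θ hθ).le
  linarith

end Energy

theorem stmt_9_general (a b : ℝ)
    (ϕ ϕd uI uId uIdd uII uIId uIIdd : ℝ → ℝ)
    (hϕd : ∀ θ ∈ Set.Ioo a b, HasDerivAt ϕ (ϕd θ) θ)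
    (hϕpos : ∀ θ ∈ Set.Ioo a b, 0 < ϕ θ)
    (huId : ∀ θ ∈ Set.Ioo a b, HasDerivAt uI (uId θ) θ)
    (huIdd : ∀ θ ∈ Set.Ioo a b, HasDerivAt uId (uIdd θ) θ)
    (huIId : ∀ θ ∈ Set.Ioo a b, HasDerivAt uII (uIId θ) θ)
    (huIIdd : ∀ θ ∈ Set.Ioo a b, HasDerivAt uIId (uIIdd θ) θ)
    (hodeI : ∀ θ ∈ Set.Ioo a b, uIdd θ + ϕ θ * uI θ = 0)
    (hodeII : ∀ θ ∈ Set.Ioo a b, uIIdd θ + ϕ θ * uII θ = 0)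
    (hW : ∀ θ ∈ Set.Ioo a b, uI θ * uIId θ - uId θ * uII θ = 1)
    (c : ℝ) (hc : c ∈ Set.Ioo a b)
    (hdec : ∀ θ ∈ Set.Ioc a c, ϕd θ ≤ 0)
    (hinc : ∀ θ ∈ Set.Ico c b, 0 ≤ ϕd θ) :
    ∀ θ ∈ Set.Ioo a b, ∀ θt ∈ Set.Ioo a b,
      (uI θ * uII θt - uI θt * uII θ) ^ 2 ≤
        (1 / ϕ c) * (1 + (uId c * uII θt - uI θt * uIId c) ^ 2) := by
  have combination_sq_le : ∀ p q, ∀ θ ∈ Ioo a b, (p * uI θ + q * uII θ) ^ 2 ≤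
      (p * uI c + q * uII c) ^ 2 + (p * uId c + q * uIId c) ^ 2 / ϕ c := fun p q θ hθ =>
    sq_le_energy_of_ode (f := fun s => p * uI s + q * uII s)
      (fd := fun s => p * uId s + q * uIId s) (fdd := fun s => p * uIdd s + q * uIIdd s) hϕd hϕpos
      (fun s hs => ((huId s hs).const_mul p).add ((huIId s hs).const_mul q))
      (fun s hs => ((huIdd s hs).const_mul p).add ((huIIdd s hs).const_mul q))
      (fun s hs => by linear_combination p * hodeI s hs + q * hodeII s hs) hc hdec hinc hθ
  intro θ hθ θt hθt
  have hvθ := combination_sq_le (uII θt) (-uI θt) θ hθ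
  have hvc := combination_sq_le (-uII c) (uI c) θt hθt
  rw [show -uII c * uId c + uI c * uIId c = 1 by linarith [hW c hc]] at hvc
  have hvc_le : (uI c * uII θt - uI θt * uII c) ^ 2 ≤ 1 / ϕ c := by
    convert hvc using 1 <;> ring
  calc (uI θ * uII θt - uI θt * uII θ) ^ 2
      ≤ (uI c * uII θt - uI θt * uII c) ^ 2 + (uId c * uII θt - uI θt * uIId c) ^ 2 / ϕ c := by
        convert hvθ using 2 <;> ring
    _ ≤ 1 / ϕ c + (uId c * uII θt - uI θt * uIId c) ^ 2 / ϕ c := by linarith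
    _ = 1 / ϕ c * (1 + (uId c * uII θt - uI θt * uIId c) ^ 2) := by ring

/-- v(θ,θ̃)² ≤ (1/ϕ(c))·(1 + w(θ̃)²) for all θ, θ̃ ∈ (a,b). -/
theorem stmt_9 (a b : ℝ) (hab : a < b)
    (ϕ ϕd uI uId uIdd uII uIId uIIdd : ℝ → ℝ)
    (hϕd : ∀ θ ∈ Set.Ioo a b, HasDerivAt ϕ (ϕd θ) θ)
    (hϕdc : ContinuousOn ϕd (Set.Ioo a b))
    (hϕpos : ∀ θ ∈ Set.Ioo a b, 0 < ϕ θ)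
    (huId : ∀ θ ∈ Set.Ioo a b, HasDerivAt uI (uId θ) θ)
    (huIdd : ∀ θ ∈ Set.Ioo a b, HasDerivAt uId (uIdd θ) θ)
    (huIId : ∀ θ ∈ Set.Ioo a b, HasDerivAt uII (uIId θ) θ)
    (huIIdd : ∀ θ ∈ Set.Ioo a b, HasDerivAt uIId (uIIdd θ) θ)
    (hodeI : ∀ θ ∈ Set.Ioo a b, uIdd θ + ϕ θ * uI θ = 0)
    (hodeII : ∀ θ ∈ Set.Ioo a b, uIIdd θ + ϕ θ * uII θ = 0)
    (hW : ∀ θ ∈ Set.Ioo a b, uI θ * uIId θ - uId θ * uII θ = 1)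
    (c : ℝ) (hc : c ∈ Set.Ioo a b)
    (hdec : ∀ θ ∈ Set.Ioc a c, ϕd θ ≤ 0)
    (hinc : ∀ θ ∈ Set.Ico c b, 0 ≤ ϕd θ) :
    ∀ θ ∈ Set.Ioo a b, ∀ θt ∈ Set.Ioo a b,
      (uI θ * uII θt - uI θt * uII θ) ^ 2 ≤
        (1 / ϕ c) * (1 + (uId c * uII θt - uI θt * uIId c) ^ 2) :=
  stmt_9_general a b ϕ ϕd uI uId uIdd uII uIId uIIdd hϕd hϕpos huId huIdd huIId huIIdd hodeI hodeII
    hW c hc hdec hinc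
end

section
/- If y : ℝ → ℝ is twice differentiable on (−1,1) and solves the Legendre differential equation of degree ν on (−1,1), then the function u(θ) = √(sin θ) · y(cos θ) is twice differentiable on (0,π) and satisfies u''(θ) + ϕ(θ)·u(θ) = 0 for all θ ∈ (0,π), where ϕ(θ) = 1/(4·sin²θ) + (ν + 1/2)². -/
/-!
Write `x = cos θ` and `s = sin θ`. Differentiating `u = √s · y(x)` twice gives
`u'' = √s · (s² y'' - 2x y' - (1/2 + x²/(4s²)) y)`. As `s² = 1 - x²`, the Legendre equation turns
`s² y'' - 2x y'` into `-ν(ν+1) y`, and `ν(ν+1) + 1/2 + x²/(4s²) = 1/(4s²) + (ν+1/2)²`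
because `x² = 1 - s²`.
-/

open Real Set Filter Topology

lemma cos_mem_Ioo_of_mem_Ioo_zero_pi {θ : ℝ} (hθ : θ ∈ Ioo 0 π) : cos θ ∈ Ioo (-1) 1 :=
  ⟨by simpa using cos_lt_cos_of_nonneg_of_le_pi hθ.1.le le_rfl hθ.2,
    by simpa using cos_lt_cos_of_nonneg_of_le_pi le_rfl hθ.2.le hθ.1⟩

noncomputable def liouvilleDeriv (y yd : ℝ → ℝ) (t : ℝ) : ℝ :=
  cos t / (2 * √(sin t)) * y (cos t) - √(sin t) * sin t * yd (cos t)

section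

variable {y yd ydd : ℝ → ℝ} {θ : ℝ}

lemma hasDerivAt_sqrt_sin_mul_comp_cos (hs : 0 < sin θ)
    (hy : HasDerivAt y (yd (cos θ)) (cos θ)) :
    HasDerivAt (fun t => √(sin t) * y (cos t)) (liouvilleDeriv y yd θ) θ := by
  have hq : √(sin θ) ≠ 0 := by positivity
  refine (((hasDerivAt_sin θ).sqrt hs.ne').mul (hy.comp θ (hasDerivAt_cos θ))).congr_deriv ?_
  simp only [liouvilleDeriv, Function.comp_apply]
  field_simp
  ring

lemma hasDerivAt_liouvilleDeriv (hs : 0 < sin θ) (hy : HasDerivAt y (yd (cos θ)) (cos θ))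
    (hyd : HasDerivAt yd (ydd (cos θ)) (cos θ)) :
    HasDerivAt (liouvilleDeriv y yd)
      (√(sin θ) * (sin θ ^ 2 * ydd (cos θ) - 2 * cos θ * yd (cos θ)
        - (1 / 2 + cos θ ^ 2 / (4 * sin θ ^ 2)) * y (cos θ))) θ := by
  have hsq : √(sin θ) ^ 2 = sin θ := sq_sqrt hs.le
  have hq : √(sin θ) ≠ 0 := by positivity
  have hsqrt := (hasDerivAt_sin θ).sqrt hs.ne'
  have hfirst := ((hasDerivAt_cos θ).div (hsqrt.const_mul 2) (by positivity)).mul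
    (hy.comp θ (hasDerivAt_cos θ))
  have hsecond := (hsqrt.mul (hasDerivAt_sin θ)).mul (hyd.comp θ (hasDerivAt_cos θ))
  refine (hfirst.sub hsecond).congr_deriv ?_
  simp only [Function.comp_apply, Pi.mul_apply, Pi.div_apply]
  -- with `sin θ = q²` the identity becomes rational in `q`
  set q := √(sin θ)
  rw [← hsq]
  field_simp
  ring

end

/-- The Liouville transformation u(θ) = √(sin θ)·y(cos θ) of a solution of the Legendre
    equation is twice differentiable on (0,π) and satisfies u'' + ϕ u = 0 with
    ϕ(θ) = 1/(4 sin² θ) + (ν + 1/2)². -/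
theorem stmt_10 (ν : ℝ) (y yd ydd : ℝ → ℝ)
    (hyd : ∀ x ∈ Set.Ioo (-1 : ℝ) 1, HasDerivAt y (yd x) x)
    (hydd : ∀ x ∈ Set.Ioo (-1 : ℝ) 1, HasDerivAt yd (ydd x) x)
    (hode : ∀ x ∈ Set.Ioo (-1 : ℝ) 1,
      (1 - x ^ 2) * ydd x - 2 * x * yd x + ν * (ν + 1) * y x = 0) :
    ∀ θ ∈ Set.Ioo 0 Real.pi,
      HasDerivAt (fun t => Real.sqrt (Real.sin t) * y (Real.cos t))
        (deriv (fun t => Real.sqrt (Real.sin t) * y (Real.cos t)) θ) θ ∧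
      HasDerivAt (deriv (fun t => Real.sqrt (Real.sin t) * y (Real.cos t)))
        (-((1 / (4 * Real.sin θ ^ 2) + (ν + 1 / 2) ^ 2)
            * (Real.sqrt (Real.sin θ) * y (Real.cos θ)))) θ := by
  have hu : ∀ t ∈ Ioo 0 π,
      HasDerivAt (fun t => √(sin t) * y (cos t)) (liouvilleDeriv y yd t) t := fun t ht =>
    hasDerivAt_sqrt_sin_mul_comp_cos (sin_pos_of_mem_Ioo ht)
      (hyd _ (cos_mem_Ioo_of_mem_Ioo_zero_pi ht))
  intro θ hθ
  have hs := sin_pos_of_mem_Ioo hθ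
  have hc := cos_mem_Ioo_of_mem_Ioo_zero_pi hθ
  have hderiv : deriv (fun t => √(sin t) * y (cos t)) =ᶠ[𝓝 θ] liouvilleDeriv y yd :=
    eventually_of_mem (isOpen_Ioo.mem_nhds hθ) fun t ht => (hu t ht).deriv
  refine ⟨(hu θ hθ).differentiableAt.hasDerivAt, ?_⟩
  refine ((hasDerivAt_liouvilleDeriv hs (hyd _ hc) (hydd _ hc)).congr_of_eventuallyEq
    hderiv).congr_deriv ?_
  have hlegendre : sin θ ^ 2 * ydd (cos θ) - 2 * cos θ * yd (cos θ)
      = -(ν * (ν + 1)) * y (cos θ) := by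
    linear_combination hode _ hc + ydd (cos θ) * sin_sq_add_cos_sq θ
  rw [hlegendre]
  field_simp
  linear_combination (-4 * y (cos θ)) * sin_sq_add_cos_sq θ
end

section
/- If y₁, y₂ : ℝ → ℝ are twice differentiable on (−1,1), solve the Legendre differential equation of degree ν on (−1,1), and satisfy the normalization (1 − x²)·(y₁'(x)·y₂(x) − y₁(x)·y₂'(x)) = 1 for all x ∈ (−1,1), then the transformed functions u₁(θ) = √(sin θ)·y₁(cos θ) and u₂(θ) = √(sin θ)·y₂(cos θ) satisfy the Wronskian identity u₁(θ)·u₂'(θ) − u₁'(θ)·u₂(θ) = 1 for all θ ∈ (0,π). -/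
/-! Multiplying by `√(sin θ)` adds to each `uᵢ'` the same multiple of `uᵢ`,
which cancels in the Wronskian, and the substitution `x = cos θ` rescales it by `(cos θ)' = -sin θ`.
Hence `u₁ u₂' - u₁' u₂ = sin² θ · (y₁' y₂ - y₁ y₂')(cos θ) = (1 - x²)(y₁' y₂ - y₁ y₂')(x) = 1`. -/

open Real

theorem wronskian_mul_comp {g φ y₁ y₂ : ℝ → ℝ} {g' φ' y₁' y₂' t : ℝ}
    (hg : HasDerivAt g g' t) (hφ : HasDerivAt φ φ' t)
    (hy₁ : HasDerivAt y₁ y₁' (φ t)) (hy₂ : HasDerivAt y₂ y₂' (φ t)) :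
    g t * y₁ (φ t) * deriv (fun s => g s * y₂ (φ s)) t
        - deriv (fun s => g s * y₁ (φ s)) t * (g t * y₂ (φ t))
      = g t ^ 2 * φ' * (y₁ (φ t) * y₂' - y₁' * y₂ (φ t)) := by
  have hu₁ : HasDerivAt (fun s => g s * y₁ (φ s)) _ t := hg.mul (hy₁.comp t hφ)
  have hu₂ : HasDerivAt (fun s => g s * y₂ (φ s)) _ t := hg.mul (hy₂.comp t hφ)
  rw [hu₁.deriv, hu₂.deriv]
  ring

theorem stmt_11_general (y₁ y₁d y₂ y₂d : ℝ → ℝ)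
    (hy₁d : ∀ x ∈ Set.Ioo (-1 : ℝ) 1, HasDerivAt y₁ (y₁d x) x)
    (hy₂d : ∀ x ∈ Set.Ioo (-1 : ℝ) 1, HasDerivAt y₂ (y₂d x) x)
    (hW : ∀ x ∈ Set.Ioo (-1 : ℝ) 1,
      (1 - x ^ 2) * (y₁d x * y₂ x - y₁ x * y₂d x) = 1) :
    ∀ θ ∈ Set.Ioo 0 Real.pi,
      (Real.sqrt (Real.sin θ) * y₁ (Real.cos θ))
          * deriv (fun t => Real.sqrt (Real.sin t) * y₂ (Real.cos t)) θ
        - deriv (fun t => Real.sqrt (Real.sin t) * y₁ (Real.cos t)) θ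
          * (Real.sqrt (Real.sin θ) * y₂ (Real.cos θ)) = 1 := by
  intro θ hθ
  have hsin : 0 < sin θ := sin_pos_of_pos_of_lt_pi hθ.1 hθ.2
  have hcos : cos θ ∈ Set.Ioo (-1 : ℝ) 1 :=
    ⟨cos_pi ▸ cos_lt_cos_of_nonneg_of_le_pi hθ.1.le le_rfl hθ.2,
      cos_zero ▸ cos_lt_cos_of_nonneg_of_le_pi le_rfl hθ.2.le hθ.1⟩
  have hsqrt : HasDerivAt (fun t => √(sin t)) (cos θ / (2 * √(sin θ))) θ :=
    (hasDerivAt_sin θ).sqrt hsin.ne'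
  rw [wronskian_mul_comp hsqrt (hasDerivAt_cos θ) (hy₁d _ hcos) (hy₂d _ hcos),
    sq_sqrt hsin.le, ← hW _ hcos, ← sin_sq]
  ring

/-- The transformed functions u₁(θ) = √(sin θ)·y₁(cos θ), u₂(θ) = √(sin θ)·y₂(cos θ)
    satisfy u₁ u₂' − u₁' u₂ = 1 on (0,π). -/
theorem stmt_11 (ν : ℝ) (y₁ y₁d y₁dd y₂ y₂d y₂dd : ℝ → ℝ)
    (hy₁d : ∀ x ∈ Set.Ioo (-1 : ℝ) 1, HasDerivAt y₁ (y₁d x) x)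
    (hy₁dd : ∀ x ∈ Set.Ioo (-1 : ℝ) 1, HasDerivAt y₁d (y₁dd x) x)
    (hy₂d : ∀ x ∈ Set.Ioo (-1 : ℝ) 1, HasDerivAt y₂ (y₂d x) x)
    (hy₂dd : ∀ x ∈ Set.Ioo (-1 : ℝ) 1, HasDerivAt y₂d (y₂dd x) x)
    (hode₁ : ∀ x ∈ Set.Ioo (-1 : ℝ) 1,
      (1 - x ^ 2) * y₁dd x - 2 * x * y₁d x + ν * (ν + 1) * y₁ x = 0)
    (hode₂ : ∀ x ∈ Set.Ioo (-1 : ℝ) 1,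
      (1 - x ^ 2) * y₂dd x - 2 * x * y₂d x + ν * (ν + 1) * y₂ x = 0)
    (hW : ∀ x ∈ Set.Ioo (-1 : ℝ) 1,
      (1 - x ^ 2) * (y₁d x * y₂ x - y₁ x * y₂d x) = 1) :
    ∀ θ ∈ Set.Ioo 0 Real.pi,
      (Real.sqrt (Real.sin θ) * y₁ (Real.cos θ))
          * deriv (fun t => Real.sqrt (Real.sin t) * y₂ (Real.cos t)) θ
        - deriv (fun t => Real.sqrt (Real.sin t) * y₁ (Real.cos t)) θ
          * (Real.sqrt (Real.sin θ) * y₂ (Real.cos θ)) = 1 :=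
  stmt_11_general y₁ y₁d y₂ y₂d hy₁d hy₂d hW
end

section
/- If y₁, y₂ : ℝ → ℝ are twice differentiable on (−1,1), solve the Legendre differential equation of degree ν on (−1,1), and satisfy the normalization (1 − x²)·(y₁'(x)·y₂(x) − y₁(x)·y₂'(x)) = 1 for all x ∈ (−1,1), then for all x, ξ ∈ (−1,1): ((1 − x²)·(1 − ξ²))^(1/4) · |y₁(x)·y₂(ξ) − y₁(ξ)·y₂(x)| ≤ √(2 / (1/4 + (ν + 1/2)²)). -/
/-!
With `c = (ν + 1/2)²`, the combination `u = y₁ · y₂(ξ) - y₁(ξ) · y₂` solves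
`((1 - t²) u')' + (c - 1/4) u = 0` with `u(ξ) = 0` and `(1 - ξ²) u'(ξ) = 1`. In the variable
`t = cos θ`, the function `v = (sin θ)^{1/2} u` solves `v'' + Q v = 0` with
`Q = c + 1/(4 sin² θ)`, which is minimal at `t = 0`. Hence, by Sonin's argument, `Q v² + v'²` is
minimal and `v² + v'²/Q` is maximal at `t = 0`, so
`v(x)² ≤ (v² + v'²/Q)(0) = (Q v² + v'²)(0) / (c + 1/4) ≤ (Q v² + v'²)(ξ) / (c + 1/4)
  = 1 / ((c + 1/4) √(1 - ξ²))`.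
This is half of the square of the claimed bound.
-/

open Set Real

theorem le_of_hasDerivAt_of_sub_mul_nonneg {a x : ℝ} {s : Set ℝ} (hs : Convex ℝ s)
    {f f' : ℝ → ℝ} (hf : ∀ t ∈ s, HasDerivAt f (f' t) t)
    (hsign : ∀ t ∈ s, 0 ≤ (t - a) * f' t) (ha : a ∈ s) (hx : x ∈ s) : f a ≤ f x := by
  rcases le_total a x with hax | hxa
  · have hsub : Icc a x ⊆ s := hs.ordConnected.out ha hx
    refine monotoneOn_of_hasDerivWithinAt_nonneg (convex_Icc a x)
      (fun t ht => (hf t (hsub ht)).continuousAt.continuousWithinAt)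
      (fun t ht => (hf t (hsub (interior_subset ht))).hasDerivWithinAt) (fun t ht => ?_)
      (left_mem_Icc.2 hax) (right_mem_Icc.2 hax) hax
    rw [interior_Icc] at ht
    exact nonneg_of_mul_nonneg_right (hsign t (hsub (Ioo_subset_Icc_self ht))) (sub_pos.2 ht.1)
  · have hsub : Icc x a ⊆ s := hs.ordConnected.out hx ha
    refine antitoneOn_of_hasDerivWithinAt_nonpos (convex_Icc x a)
      (fun t ht => (hf t (hsub ht)).continuousAt.continuousWithinAt)
      (fun t ht => (hf t (hsub (interior_subset ht))).hasDerivWithinAt) (fun t ht => ?_)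
      (left_mem_Icc.2 hxa) (right_mem_Icc.2 hxa) hxa
    rw [interior_Icc] at ht
    exact nonpos_of_mul_nonneg_right (hsign t (hsub (Ioo_subset_Icc_self ht))) (sub_neg.2 ht.2)

theorem le_of_hasDerivAt_of_sub_mul_nonpos {a x : ℝ} {s : Set ℝ} (hs : Convex ℝ s)
    {f f' : ℝ → ℝ} (hf : ∀ t ∈ s, HasDerivAt f (f' t) t)
    (hsign : ∀ t ∈ s, (t - a) * f' t ≤ 0) (ha : a ∈ s) (hx : x ∈ s) : f x ≤ f a :=
  neg_le_neg_iff.1 <| le_of_hasDerivAt_of_sub_mul_nonneg (f := -f) (f' := -f') hs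
    (fun t ht => (hf t ht).neg) (fun t ht => by simpa using hsign t ht) ha hx

theorem one_sub_sq_pos {t : ℝ} (ht : t ∈ Ioo (-1 : ℝ) 1) : 0 < 1 - t ^ 2 := by
  nlinarith [ht.1, ht.2]

theorem hasDerivAt_sqrt_one_sub_sq {t : ℝ} (ht : t ∈ Ioo (-1 : ℝ) 1) :
    HasDerivAt (fun s => √(1 - s ^ 2)) (-t / √(1 - t ^ 2)) t := by
  convert ((hasDerivAt_pow 2 t).const_sub 1).sqrt (one_sub_sq_pos ht).ne' using 1
  field_simp
  ring

theorem rpow_one_div_four_mul_abs_sq {a b : ℝ} (ha : 0 ≤ a) (hb : 0 ≤ b) (w : ℝ) :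
    ((a * b) ^ ((1 : ℝ) / 4) * |w|) ^ 2 = √a * √b * w ^ 2 := by
  rw [mul_pow, sq_abs, ← rpow_natCast, ← rpow_mul (mul_nonneg ha hb), ← sqrt_mul ha,
    sqrt_eq_rpow]
  norm_num

namespace Legendre

variable (c : ℝ) (u u' u'' : ℝ → ℝ)

def IsSolution : Prop :=
  ∀ t ∈ Ioo (-1 : ℝ) 1, HasDerivAt u (u' t) t ∧ HasDerivAt u' (u'' t) t ∧
    (1 - t ^ 2) * u'' t - 2 * t * u' t + (c - 1 / 4) * u t = 0

def flux (t : ℝ) : ℝ := t * u t - 2 * ((1 - t ^ 2) * u' t)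

def weight (t : ℝ) : ℝ := 4 * c * (1 - t ^ 2) + 1

-- `energy / (4 √(1 - t²))` is `Q v² + v'²` and `√(1 - t²) * energy / weight` is `v² + v'²/Q`.
def energy (t : ℝ) : ℝ := weight c t * u t ^ 2 + flux u u' t ^ 2

variable {c u u' u''}

theorem weight_pos (hc : -1 / 4 < c) {t : ℝ} (ht : t ∈ Ioo (-1 : ℝ) 1) : 0 < weight c t := by
  have hweight : weight c t = (4 * c + 1) * (1 - t ^ 2) + t ^ 2 := by unfold weight; ring
  rw [hweight]
  have := mul_pos (by linarith : 0 < 4 * c + 1) (one_sub_sq_pos ht)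
  positivity

theorem hasDerivAt_weight (t : ℝ) : HasDerivAt (weight c) (-(8 * c * t)) t :=
  ((((hasDerivAt_pow 2 t).const_sub 1).const_mul (4 * c)).add_const 1).congr_deriv (by ring)

theorem hasDerivAt_energy {t : ℝ} (hu : HasDerivAt u (u' t) t) (hu' : HasDerivAt u' (u'' t) t)
    (hode : (1 - t ^ 2) * u'' t - 2 * t * u' t + (c - 1 / 4) * u t = 0) :
    HasDerivAt (energy c u u')
      (t * ((1 - 4 * c) * u t ^ 2 + 4 * t * u t * u' t - 4 * (1 - t ^ 2) * u' t ^ 2)) t := by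
  have hflux : HasDerivAt (flux u u')
      (1 * u t + t * u' t - 2 * (-(2 * t) * u' t + (1 - t ^ 2) * u'' t)) t := by
    have hsq : HasDerivAt (fun s : ℝ => 1 - s ^ 2) (-(2 * t)) t := by
      simpa using (hasDerivAt_pow 2 t).const_sub 1
    exact ((hasDerivAt_id t).mul hu).sub ((hsq.mul hu').const_mul 2)
  refine (((hasDerivAt_weight t).mul (hu.pow 2)).add (hflux.pow 2)).congr_deriv ?_
  simp only [flux, weight, Pi.pow_apply]
  linear_combination (-4 * (t * u t - 2 * ((1 - t ^ 2) * u' t))) * hode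

theorem energy_eq_four {ξ : ℝ} (hu : u ξ = 0) (hu' : (1 - ξ ^ 2) * u' ξ = 1) :
    energy c u u' ξ = 4 := by
  simp only [energy, flux, hu, hu']
  norm_num

namespace IsSolution

theorem hasDerivAt_energy_div_sqrt (hsol : IsSolution c u u' u'') {t : ℝ}
    (ht : t ∈ Ioo (-1 : ℝ) 1) :
    HasDerivAt (fun s => energy c u u' s / √(1 - s ^ 2))
      (2 * t * u t ^ 2 / √(1 - t ^ 2) ^ 3) t := by
  obtain ⟨hu, hu', hode⟩ := hsol t ht
  have hσ : 0 < √(1 - t ^ 2) := sqrt_pos.2 (one_sub_sq_pos ht)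
  have hσsq : √(1 - t ^ 2) ^ 2 = 1 - t ^ 2 := sq_sqrt (one_sub_sq_pos ht).le
  refine ((hasDerivAt_energy hu hu' hode).div (hasDerivAt_sqrt_one_sub_sq ht)
    hσ.ne').congr_deriv ?_
  field_simp
  simp only [energy, weight, flux]
  rw [hσsq]
  ring

theorem hasDerivAt_sqrt_mul_energy_div_weight (hsol : IsSolution c u u' u'')
    (hc : -1 / 4 < c) {t : ℝ} (ht : t ∈ Ioo (-1 : ℝ) 1) :
    HasDerivAt (fun s => √(1 - s ^ 2) * energy c u u' s / weight c s)
      (-(2 * t * flux u u' t ^ 2) / (√(1 - t ^ 2) * weight c t ^ 2)) t := by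
  obtain ⟨hu, hu', hode⟩ := hsol t ht
  have hσ : 0 < √(1 - t ^ 2) := sqrt_pos.2 (one_sub_sq_pos ht)
  have hσsq : √(1 - t ^ 2) ^ 2 = 1 - t ^ 2 := sq_sqrt (one_sub_sq_pos ht).le
  have hP := weight_pos hc ht
  refine (((hasDerivAt_sqrt_one_sub_sq ht).mul (hasDerivAt_energy hu hu' hode)).div
    (hasDerivAt_weight t) hP.ne').congr_deriv ?_
  field_simp
  simp only [energy, weight, flux, Pi.mul_apply]
  ring_nf
  simp only [hσsq]
  ring

theorem sqrt_mul_energy_zero_le (hsol : IsSolution c u u' u'') {ξ : ℝ}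
    (hξ : ξ ∈ Ioo (-1 : ℝ) 1) (hu0 : u ξ = 0) (hu1 : (1 - ξ ^ 2) * u' ξ = 1) :
    √(1 - ξ ^ 2) * energy c u u' 0 ≤ 4 := by
  have hmono := le_of_hasDerivAt_of_sub_mul_nonneg (convex_Ioo (-1) 1)
    (fun t ht => hsol.hasDerivAt_energy_div_sqrt ht) (fun t ht => ?_)
    (by norm_num : (0 : ℝ) ∈ Ioo (-1) 1) hξ
  · norm_num [energy_eq_four hu0 hu1] at hmono
    rwa [le_div_iff₀ (sqrt_pos.2 (one_sub_sq_pos hξ)), mul_comm] at hmono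
  · have := sqrt_nonneg (1 - t ^ 2)
    rw [show (t - 0) * (2 * t * u t ^ 2 / √(1 - t ^ 2) ^ 3)
      = 2 * (t * u t) ^ 2 / √(1 - t ^ 2) ^ 3 by ring]
    positivity

theorem sqrt_mul_sq_mul_le_energy_zero (hsol : IsSolution c u u' u'') (hc : -1 / 4 < c)
    {x : ℝ} (hx : x ∈ Ioo (-1 : ℝ) 1) :
    √(1 - x ^ 2) * u x ^ 2 * (4 * c + 1) ≤ energy c u u' 0 := by
  have hmono := le_of_hasDerivAt_of_sub_mul_nonpos (convex_Ioo (-1) 1)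
    (fun t ht => hsol.hasDerivAt_sqrt_mul_energy_div_weight hc ht) (fun t ht => ?_)
    (by norm_num : (0 : ℝ) ∈ Ioo (-1) 1) hx
  · have hweight₀ : weight c 0 = 4 * c + 1 := by norm_num [weight]
    norm_num [hweight₀] at hmono
    have hlow : √(1 - x ^ 2) * u x ^ 2 ≤ √(1 - x ^ 2) * energy c u u' x / weight c x := by
      have : weight c x * u x ^ 2 ≤ energy c u u' x := le_add_of_nonneg_right (sq_nonneg _)
      rw [le_div_iff₀ (weight_pos hc hx)]
      nlinarith [sqrt_nonneg (1 - x ^ 2)]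
    rw [← le_div_iff₀ (by linarith)]
    exact hlow.trans hmono
  · have := sqrt_nonneg (1 - t ^ 2)
    have := weight_pos hc ht
    rw [show (t - 0) * (-(2 * t * flux u u' t ^ 2) / (√(1 - t ^ 2) * weight c t ^ 2))
      = -(2 * (t * flux u u' t) ^ 2 / (√(1 - t ^ 2) * weight c t ^ 2)) by ring,
      neg_nonpos]
    positivity

theorem sqrt_mul_sqrt_mul_sq_le (hsol : IsSolution c u u' u'') (hc : -1 / 4 < c) {ξ : ℝ}
    (hξ : ξ ∈ Ioo (-1 : ℝ) 1) (hu0 : u ξ = 0) (hu1 : (1 - ξ ^ 2) * u' ξ = 1)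
    {x : ℝ} (hx : x ∈ Ioo (-1 : ℝ) 1) :
    √(1 - ξ ^ 2) * √(1 - x ^ 2) * u x ^ 2 ≤ 4 / (4 * c + 1) := by
  rw [le_div_iff₀ (by linarith)]
  calc √(1 - ξ ^ 2) * √(1 - x ^ 2) * u x ^ 2 * (4 * c + 1)
      = √(1 - ξ ^ 2) * (√(1 - x ^ 2) * u x ^ 2 * (4 * c + 1)) := by ring
    _ ≤ √(1 - ξ ^ 2) * energy c u u' 0 :=
      mul_le_mul_of_nonneg_left (hsol.sqrt_mul_sq_mul_le_energy_zero hc hx) (sqrt_nonneg _)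
    _ ≤ 4 := hsol.sqrt_mul_energy_zero_le hξ hu0 hu1

end IsSolution

end Legendre

/-- The inequality for (normalized pairs of solutions of) Legendre's equation:
    ((1−x²)(1−ξ²))^{1/4} |y₁(x) y₂(ξ) − y₁(ξ) y₂(x)| ≤ √(2/(1/4 + (ν+1/2)²)). -/
theorem stmt_12 (ν : ℝ) (y₁ y₁d y₁dd y₂ y₂d y₂dd : ℝ → ℝ)
    (hy₁d : ∀ x ∈ Set.Ioo (-1 : ℝ) 1, HasDerivAt y₁ (y₁d x) x)
    (hy₁dd : ∀ x ∈ Set.Ioo (-1 : ℝ) 1, HasDerivAt y₁d (y₁dd x) x)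
    (hy₂d : ∀ x ∈ Set.Ioo (-1 : ℝ) 1, HasDerivAt y₂ (y₂d x) x)
    (hy₂dd : ∀ x ∈ Set.Ioo (-1 : ℝ) 1, HasDerivAt y₂d (y₂dd x) x)
    (hode₁ : ∀ x ∈ Set.Ioo (-1 : ℝ) 1,
      (1 - x ^ 2) * y₁dd x - 2 * x * y₁d x + ν * (ν + 1) * y₁ x = 0)
    (hode₂ : ∀ x ∈ Set.Ioo (-1 : ℝ) 1,
      (1 - x ^ 2) * y₂dd x - 2 * x * y₂d x + ν * (ν + 1) * y₂ x = 0)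
    (hW : ∀ x ∈ Set.Ioo (-1 : ℝ) 1,
      (1 - x ^ 2) * (y₁d x * y₂ x - y₁ x * y₂d x) = 1) :
    ∀ x ∈ Set.Ioo (-1 : ℝ) 1, ∀ ξ ∈ Set.Ioo (-1 : ℝ) 1,
      ((1 - x ^ 2) * (1 - ξ ^ 2)) ^ ((1 : ℝ) / 4)
          * |y₁ x * y₂ ξ - y₁ ξ * y₂ x|
        ≤ Real.sqrt (2 / (1 / 4 + (ν + 1 / 2) ^ 2)) := by
  intro x hx ξ hξ
  have hsol : Legendre.IsSolution ((ν + 1 / 2) ^ 2) (fun t => y₁ t * y₂ ξ - y₁ ξ * y₂ t)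
      (fun t => y₁d t * y₂ ξ - y₁ ξ * y₂d t) (fun t => y₁dd t * y₂ ξ - y₁ ξ * y₂dd t) :=
    fun t ht => ⟨((hy₁d t ht).mul_const _).sub ((hy₂d t ht).const_mul _),
      ((hy₁dd t ht).mul_const _).sub ((hy₂dd t ht).const_mul _),
      by linear_combination y₂ ξ * hode₁ t ht - y₁ ξ * hode₂ t ht⟩
  have hkey := hsol.sqrt_mul_sqrt_mul_sq_le (lt_of_lt_of_le (by norm_num) (sq_nonneg _)) hξ
    (sub_self _) (hW ξ hξ) hx
  have hx₀ := (one_sub_sq_pos hx).le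
  have hξ₀ := (one_sub_sq_pos hξ).le
  rw [le_sqrt (mul_nonneg (rpow_nonneg (mul_nonneg hx₀ hξ₀) _) (abs_nonneg _)) (by positivity),
    rpow_one_div_four_mul_abs_sq hx₀ hξ₀]
  calc √(1 - x ^ 2) * √(1 - ξ ^ 2) * (y₁ x * y₂ ξ - y₁ ξ * y₂ x) ^ 2
      ≤ 4 / (4 * (ν + 1 / 2) ^ 2 + 1) := by linarith
    _ ≤ 2 / (1 / 4 + (ν + 1 / 2) ^ 2) := by
      rw [div_le_div_iff₀ (by positivity) (by positivity)]
      nlinarith [sq_nonneg (ν + 1 / 2)]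
end

section
/- The formal power series F = Σ_{j≥0} V_j X^j over ℝ satisfies the functional equation X·F² + (X − 1)·F + 1 = 0 in the ring of formal power series ℝ[[X]]. -/
open PowerSeries Finset

theorem PowerSeries.coeff_mk_sq {R : Type*} [CommSemiring R] (a : ℕ → R) (n : ℕ) :
    coeff n (mk a ^ 2) = ∑ i ∈ range (n + 1), a i * a (n - i) := by
  rw [sq, coeff_mul, Nat.sum_antidiagonal_eq_sum_range_succ_mk]
  simp only [coeff_mk]

/-- The generating power series F = Σ V_j X^j satisfies X F² + (X − 1) F + 1 = 0 in ℝ[[X]]. -/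
theorem stmt_14 (V : ℕ → ℝ) (hV0 : V 0 = 1)
    (hVrec : ∀ j : ℕ, V (j + 1) = (∑ i ∈ Finset.range (j + 1), V i * V (j - i)) + V j) :
    PowerSeries.X * (PowerSeries.mk V) ^ 2
      + (PowerSeries.X - 1) * PowerSeries.mk V + 1 = (0 : PowerSeries ℝ) := by
  ext (_ | j)
  · simp [hV0, sub_mul]
  -- the coefficient of X^(j+1) is [F²]_j + V_j - V_(j+1), which the recursion makes vanish
  · simp only [sub_mul, one_mul, map_add, map_sub, coeff_succ_X_mul, coeff_mk_sq, coeff_mk,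
      coeff_one, Nat.succ_ne_zero, if_false, map_zero]
    linarith [hVrec j]
end

section
/- For every real z with 0 < |z| < γ, where γ = 3 − 2√2, the series Σ_{j=0}^{∞} V_j·z^j converges and its sum equals (1 − z − √(1 − z/γ)·√(1 − γz)) / (2z). -/
/-!
The `V j` are the large Schröder numbers. Write `γ = 3 - 2√2`. For `0 ≤ x ≤ γ` the partial sums
of `∑ V j xʲ` stay below `1 + √2`, the fixed point of `M ↦ 1 + γ (M² + M)`, because the
convolution sums up to `n` are dominated by the square of the `n`-th partial sum. So the series
converges absolutely for `|z| ≤ γ`, and the Cauchy product turns the recurrence into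
`z s² + (z - 1) s + 1 = 0` for its sum `s`. The bound `|s| ≤ 1 + √2` gives
`|z (1 + 2 s)| < γ (3 + 2√2) = 1`, which selects the root, and
`(1 - z)² - 4 z = (1 - z / γ) (1 - γ z)`.
-/

open Finset

theorem sum_range_sum_range_mul_sub_le_sq {R : Type*} [CommSemiring R] [PartialOrder R]
    [IsOrderedRing R] {a : ℕ → R} (ha : ∀ i, 0 ≤ a i) (n : ℕ) :
    ∑ j ∈ range n, ∑ i ∈ range (j + 1), a i * a (j - i) ≤ (∑ i ∈ range n, a i) ^ 2 := by
  rw [sum_range_diag_flip n fun i k => a i * a k, sq, sum_mul]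
  refine sum_le_sum fun m _ => ?_
  rw [← mul_sum]
  exact mul_le_mul_of_nonneg_left
    (sum_le_sum_of_subset_of_nonneg (range_subset_range.mpr (Nat.sub_le n m)) fun i _ _ => ha i)
    (ha m)

namespace LargeSchroder

def Recurrence (V : ℕ → ℝ) : Prop :=
  ∀ j : ℕ, V (j + 1) = (∑ i ∈ range (j + 1), V i * V (j - i)) + V j

variable {V : ℕ → ℝ}

theorem nonneg (h0 : 0 ≤ V 0) (hV : Recurrence V) (j : ℕ) : 0 ≤ V j := by
  induction j using Nat.strong_induction_on with
  | _ j ih =>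
    cases j with
    | zero => exact h0
    | succ j =>
      rw [hV]
      refine add_nonneg (sum_nonneg fun i hi => ?_) (ih j j.lt_succ_self)
      have hi := mem_range.mp hi
      exact mul_nonneg (ih i (by omega)) (ih (j - i) (by omega))

theorem mul_pow_nonneg (h0 : 0 ≤ V 0) (hV : Recurrence V) {x : ℝ} (hx : 0 ≤ x) (j : ℕ) :
    0 ≤ V j * x ^ j :=
  mul_nonneg (nonneg h0 hV j) (pow_nonneg hx j)

theorem mul_pow_succ (hV : Recurrence V) (x : ℝ) (j : ℕ) :
    V (j + 1) * x ^ (j + 1) =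
      x * (∑ i ∈ range (j + 1), V i * x ^ i * (V (j - i) * x ^ (j - i)) + V j * x ^ j) := by
  have hconv : ∀ i ∈ range (j + 1),
      V i * x ^ i * (V (j - i) * x ^ (j - i)) = V i * V (j - i) * x ^ j := fun i hi => by
    rw [← pow_mul_pow_sub x (Nat.lt_succ_iff.mp (mem_range.mp hi))]
    ring
  rw [sum_congr rfl hconv, ← sum_mul, hV j]
  ring

section FixedPoint

variable (hV0 : V 0 = 1) (hV : Recurrence V) {x M : ℝ} (hx : 0 ≤ x) (hM : 0 ≤ M)
  (hfix : 1 + x * (M ^ 2 + M) ≤ M)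
include hV0 hV hx hM hfix

theorem sum_range_mul_pow_le (n : ℕ) : ∑ j ∈ range n, V j * x ^ j ≤ M := by
  have ha := mul_pow_nonneg (zero_le_one.trans hV0.ge) hV hx
  induction n with
  | zero => simpa using hM
  | succ n ih =>
    have hP := sum_nonneg fun j (_ : j ∈ range n) => ha j
    have hconv := sum_range_sum_range_mul_sub_le_sq ha n
    calc ∑ j ∈ range (n + 1), V j * x ^ j
        = 1 + x * (∑ j ∈ range n, ∑ i ∈ range (j + 1),
              V i * x ^ i * (V (j - i) * x ^ (j - i)) + ∑ j ∈ range n, V j * x ^ j) := by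
          rw [sum_range_succ', sum_congr rfl fun j _ => mul_pow_succ hV x j, ← mul_sum,
            sum_add_distrib, hV0]
          ring
      _ ≤ 1 + x * (M ^ 2 + M) := by
          gcongr
          exact hconv.trans (pow_le_pow_left₀ hP ih 2)
      _ ≤ M := hfix

theorem summable_mul_pow : Summable fun j => V j * x ^ j :=
  summable_of_sum_range_le (mul_pow_nonneg (zero_le_one.trans hV0.ge) hV hx)
    (sum_range_mul_pow_le hV0 hV hx hM hfix)

theorem tsum_mul_pow_le : ∑' j, V j * x ^ j ≤ M :=
  Real.tsum_le_of_sum_range_le (mul_pow_nonneg (zero_le_one.trans hV0.ge) hV hx)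
    (sum_range_mul_pow_le hV0 hV hx hM hfix)

end FixedPoint

theorem quadratic_of_hasSum (hV0 : V 0 = 1) (hV : Recurrence V) {z s : ℝ}
    (hz : Summable fun j => ‖V j * z ^ j‖) (hs : HasSum (fun j => V j * z ^ j) s) :
    z * s ^ 2 + (z - 1) * s + 1 = 0 := by
  have hsq : HasSum (fun n => ∑ i ∈ range (n + 1), V i * z ^ i * (V (n - i) * z ^ (n - i)))
      (s * s) := by
    simpa only [hs.tsum_eq] using hasSum_sum_range_mul_of_summable_norm hz hz
  have htail : HasSum (fun n => V (n + 1) * z ^ (n + 1)) (s - 1) := by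
    simpa [hV0] using (hasSum_nat_add_iff' 1).mpr hs
  have hrec : HasSum (fun n => V (n + 1) * z ^ (n + 1)) (z * (s * s + s)) := by
    simpa only [mul_pow_succ hV] using (hsq.add hs).mul_left z
  linear_combination hrec.unique htail

end LargeSchroder

theorem quadratic_root_eq {z s : ℝ} (hz : z ≠ 0) (hq : z * s ^ 2 + (z - 1) * s + 1 = 0)
    (hpos : 0 < 1 - z - 2 * z * s) : s = (1 - z - √((1 - z) ^ 2 - 4 * z)) / (2 * z) := by
  have hsqrt : √((1 - z) ^ 2 - 4 * z) = 1 - z - 2 * z * s :=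
    (Real.sqrt_eq_iff_mul_self_eq_of_pos hpos).mpr (by linear_combination 4 * z * hq)
  rw [hsqrt]
  field_simp
  ring

theorem three_sub_two_sqrt_two_mul_three_add : (3 - 2 * √2) * (3 + 2 * √2) = 1 := by
  ring_nf
  norm_num

theorem three_sub_two_sqrt_two_pos : 0 < 3 - 2 * √2 := by
  nlinarith [three_sub_two_sqrt_two_mul_three_add, Real.sqrt_nonneg 2]

theorem sqrt_one_sub_div_mul_sqrt_one_sub_mul {z : ℝ} (hz : z ≤ 3 - 2 * √2) :
    √(1 - z / (3 - 2 * √2)) * √(1 - (3 - 2 * √2) * z) = √((1 - z) ^ 2 - 4 * z) := by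
  rw [← Real.sqrt_mul (sub_nonneg.mpr ((div_le_one three_sub_two_sqrt_two_pos).mpr hz))]
  congr 1
  rw [div_eq_mul_inv, inv_eq_of_mul_eq_one_right three_sub_two_sqrt_two_mul_three_add]
  linear_combination (-z ^ 2) * three_sub_two_sqrt_two_mul_three_add
    + (-8 * z ^ 2) * Real.sq_sqrt (zero_le_two : (0 : ℝ) ≤ 2)

theorem one_add_mul_sq_add_le_one_add_sqrt_two {x : ℝ} (hx : x ≤ 3 - 2 * √2) :
    1 + x * ((1 + √2) ^ 2 + (1 + √2)) ≤ 1 + √2 := by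
  have h2 := Real.sq_sqrt (zero_le_two : (0 : ℝ) ≤ 2)
  nlinarith [Real.sqrt_nonneg 2]

theorem one_sub_sub_two_mul_pos {z s : ℝ} (hz : |z| < 3 - 2 * √2) (hs : |s| ≤ 1 + √2) :
    0 < 1 - z - 2 * z * s := by
  have hs' : |1 + 2 * s| ≤ 3 + 2 * √2 := by
    have := abs_le.mp hs
    exact abs_le.mpr ⟨by linarith, by linarith⟩
  have hlt : |z * (1 + 2 * s)| < 1 :=
    calc |z * (1 + 2 * s)| = |z| * |1 + 2 * s| := abs_mul z _
      _ ≤ |z| * (3 + 2 * √2) := by gcongr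
      _ < (3 - 2 * √2) * (3 + 2 * √2) := by gcongr
      _ = 1 := three_sub_two_sqrt_two_mul_three_add
  linarith [le_abs_self (z * (1 + 2 * s))]

/-- For 0 < |z| < γ = 3 − 2√2 the series Σ V_j z^j converges to
    (1 − z − √(1 − z/γ)·√(1 − γ z)) / (2z). -/
theorem stmt_15 (V : ℕ → ℝ) (hV0 : V 0 = 1)
    (hVrec : ∀ j : ℕ, V (j + 1) = (∑ i ∈ Finset.range (j + 1), V i * V (j - i)) + V j) :
    ∀ z : ℝ, 0 < |z| → |z| < 3 - 2 * Real.sqrt 2 →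
      HasSum (fun j : ℕ => V j * z ^ j)
        ((1 - z - Real.sqrt (1 - z / (3 - 2 * Real.sqrt 2))
            * Real.sqrt (1 - (3 - 2 * Real.sqrt 2) * z)) / (2 * z)) := by
  intro z hz0 hzγ
  have hfix := one_add_mul_sq_add_le_one_add_sqrt_two hzγ.le
  have hM : (0 : ℝ) ≤ 1 + √2 := by positivity
  have hnorm : ∀ j, ‖V j * z ^ j‖ = V j * |z| ^ j := fun j => by
    rw [norm_mul, norm_pow, Real.norm_eq_abs, Real.norm_eq_abs,
      abs_of_nonneg (LargeSchroder.nonneg (zero_le_one.trans hV0.ge) hVrec j)]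
  have hsum : Summable fun j => ‖V j * z ^ j‖ := by
    simpa only [hnorm] using LargeSchroder.summable_mul_pow hV0 hVrec (abs_nonneg z) hM hfix
  have hs_le : |∑' j, V j * z ^ j| ≤ 1 + √2 := by
    refine (norm_tsum_le_tsum_norm hsum).trans ?_
    simpa only [hnorm] using LargeSchroder.tsum_mul_pow_le hV0 hVrec (abs_nonneg z) hM hfix
  have hq := LargeSchroder.quadratic_of_hasSum hV0 hVrec hsum hsum.of_norm.hasSum
  rw [sqrt_one_sub_div_mul_sqrt_one_sub_mul ((le_abs_self z).trans hzγ.le),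
    ← quadratic_root_eq (abs_pos.mp hz0) hq (one_sub_sub_two_mul_pos hzγ hs_le)]
  exact hsum.of_norm.hasSum
end

section
/- The series Σ_{j=0}^{∞} V_j·α^j converges for every real α with 0 ≤ α < γ, and diverges for every real α with α > γ, where γ = 3 − 2√2; that is, the power series with coefficients V_j has radius of convergence γ. -/
/-- Triangle sum is at most the square of the full sum, for nonnegative terms. -/
lemma tri_le_sq (g : ℕ → ℝ) (hg : ∀ j, 0 ≤ g j) (N : ℕ) :
    ∑ k ∈ Finset.range N, ∑ i ∈ Finset.range (k + 1), g i * g (k - i)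
      ≤ (∑ j ∈ Finset.range N, g j) ^ 2 := by
  classical
  have h2 : (∑ j ∈ Finset.range N, g j) ^ 2
      = ∑ p ∈ Finset.range N ×ˢ Finset.range N, g p.1 * g p.2 := by
    rw [sq, Finset.sum_mul_sum, Finset.sum_product]
  have h1 : ∑ k ∈ Finset.range N, ∑ i ∈ Finset.range (k + 1), g i * g (k - i)
      = ∑ x ∈ (Finset.range N).sigma (fun k => Finset.range (k + 1)),
          g x.2 * g (x.1 - x.2) := by
    rw [Finset.sum_sigma]
  rw [h1, h2]
  have hinj : ∀ x ∈ (Finset.range N).sigma (fun k => Finset.range (k + 1)),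
      ∀ y ∈ (Finset.range N).sigma (fun k => Finset.range (k + 1)),
      (fun x : Σ _ : ℕ, ℕ => (x.2, x.1 - x.2)) x
        = (fun x : Σ _ : ℕ, ℕ => (x.2, x.1 - x.2)) y → x = y := by
    rintro ⟨k, i⟩ hk ⟨l, m⟩ hl h
    simp only [Finset.mem_sigma, Finset.mem_range, Nat.lt_succ_iff] at hk hl
    simp only [Prod.mk.injEq] at h
    obtain ⟨h1', h2'⟩ := h
    have hk1 : k = l := by omega
    subst hk1; subst h1'; rfl
  have himg := Finset.sum_image (f := fun p : ℕ × ℕ => g p.1 * g p.2) hinj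
  calc ∑ x ∈ (Finset.range N).sigma (fun k => Finset.range (k + 1)), g x.2 * g (x.1 - x.2)
      = ∑ p ∈ ((Finset.range N).sigma (fun k => Finset.range (k + 1))).image
          (fun x : Σ _ : ℕ, ℕ => (x.2, x.1 - x.2)), g p.1 * g p.2 := by rw [himg]
    _ ≤ ∑ p ∈ Finset.range N ×ˢ Finset.range N, g p.1 * g p.2 := by
        apply Finset.sum_le_sum_of_subset_of_nonneg
        · intro p hp
          simp only [Finset.mem_image, Finset.mem_sigma, Finset.mem_range,
            Nat.lt_succ_iff] at hp
          obtain ⟨⟨k, i⟩, ⟨hkN, hik⟩, rfl⟩ := hp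
          simp only [Finset.mem_product, Finset.mem_range]
          dsimp only at hkN hik ⊢
          omega
        · intro p _ _
          exact mul_nonneg (hg _) (hg _)

/-- The power series Σ V_j α^j converges for 0 ≤ α < γ and diverges for α > γ,
    where γ = 3 − 2√2; i.e. its radius of convergence is γ. -/
theorem stmt_16 (V : ℕ → ℝ) (hV0 : V 0 = 1)
    (hVrec : ∀ j : ℕ, V (j + 1) = (∑ i ∈ Finset.range (j + 1), V i * V (j - i)) + V j) :
    (∀ α : ℝ, 0 ≤ α → α < 3 - 2 * Real.sqrt 2 → Summable (fun j : ℕ => V j * α ^ j)) ∧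
    (∀ α : ℝ, 3 - 2 * Real.sqrt 2 < α → ¬ Summable (fun j : ℕ => V j * α ^ j)) := by
  have hs2 : Real.sqrt 2 ^ 2 = 2 := Real.sq_sqrt (by norm_num)
  have hs2a : (1 : ℝ) < Real.sqrt 2 := by nlinarith [Real.sqrt_nonneg 2]
  have hs2b : Real.sqrt 2 < 1.5 := by nlinarith [Real.sqrt_nonneg 2]
  have hγpos : (0 : ℝ) < 3 - 2 * Real.sqrt 2 := by nlinarith
  have hγlt1 : (3 : ℝ) - 2 * Real.sqrt 2 < 1 := by nlinarith
  -- positivity of V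
  have hpos : ∀ j, 0 < V j := by
    intro j
    induction j using Nat.strong_induction_on with
    | _ j ih =>
      match j with
      | 0 => rw [hV0]; norm_num
      | Nat.succ j =>
        rw [hVrec j]
        have hsum : 0 ≤ ∑ i ∈ Finset.range (j + 1), V i * V (j - i) := by
          apply Finset.sum_nonneg
          intro i hi
          rw [Finset.mem_range] at hi
          exact mul_nonneg (ih i (by omega)).le (ih (j - i) (by omega)).le
        have := ih j (by omega)
        linarith
  -- the convolution rewrite
  have hconv : ∀ (α : ℝ) (n : ℕ),
      (∑ i ∈ Finset.range (n + 1), V i * V (n - i)) * α ^ n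
        = ∑ i ∈ Finset.range (n + 1), (V i * α ^ i) * (V (n - i) * α ^ (n - i)) := by
    intro α n
    rw [Finset.sum_mul]
    apply Finset.sum_congr rfl
    intro i hi
    rw [Finset.mem_range, Nat.lt_succ_iff] at hi
    have hpow : α ^ i * α ^ (n - i) = α ^ n := by
      rw [← pow_add, Nat.add_sub_cancel' hi]
    calc V i * V (n - i) * α ^ n = V i * V (n - i) * (α ^ i * α ^ (n - i)) := by rw [hpow]
      _ = V i * α ^ i * (V (n - i) * α ^ (n - i)) := by ring
  constructor
  · -- convergence
    intro α hα0 hαγ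
    rcases eq_or_lt_of_le hα0 with heq | hαpos
    · -- α = 0
      apply summable_of_ne_finset_zero (s := {0})
      intro j hj
      simp only [Finset.mem_singleton] at hj
      rw [← heq, zero_pow hj, mul_zero]
    · have hα1 : α < 1 := lt_trans hαγ hγlt1
      set L : ℝ := (1 - α) / (2 * α) with hL
      have hL0 : 0 < L := div_pos (by linarith) (by linarith)
      have h2aL : 2 * α * L = 1 - α := by
        rw [hL]; field_simp
      have hd : 0 < α ^ 2 - 6 * α + 1 := by
        have h1' : 0 < (3 - 2 * Real.sqrt 2 - α) := by linarith
        have h2' : 0 < (3 + 2 * Real.sqrt 2 - α) := by nlinarith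
        nlinarith [mul_pos h1' h2']
      have key : α * L ^ 2 + (α - 1) * L + 1 ≤ 0 := by
        nlinarith [hd, h2aL, hαpos, sq_nonneg L]
      have hbound : ∀ N, ∑ j ∈ Finset.range N, V j * α ^ j ≤ L := by
        intro N
        induction N with
        | zero => simpa using hL0.le
        | succ N ihN =>
          have hSnn : 0 ≤ ∑ j ∈ Finset.range N, V j * α ^ j :=
            Finset.sum_nonneg fun j _ => mul_nonneg (hpos j).le (pow_nonneg hα0 j)
          rw [Finset.sum_range_succ']
          have hterm : ∀ i ∈ Finset.range N, V (i + 1) * α ^ (i + 1)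
              = α * ((∑ m ∈ Finset.range (i + 1), V m * V (i - m)) * α ^ i
                + V i * α ^ i) := by
            intro i _
            rw [hVrec i, pow_succ]
            ring
          rw [Finset.sum_congr rfl hterm, ← Finset.mul_sum, Finset.sum_add_distrib]
          have hA : ∑ i ∈ Finset.range N,
              (∑ m ∈ Finset.range (i + 1), V m * V (i - m)) * α ^ i
                ≤ (∑ j ∈ Finset.range N, V j * α ^ j) ^ 2 := by
            have := tri_le_sq (fun j => V j * α ^ j)
              (fun j => mul_nonneg (hpos j).le (pow_nonneg hα0 j)) N
            calc ∑ i ∈ Finset.range N,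
                (∑ m ∈ Finset.range (i + 1), V m * V (i - m)) * α ^ i
                = ∑ i ∈ Finset.range N, ∑ m ∈ Finset.range (i + 1),
                    (V m * α ^ m) * (V (i - m) * α ^ (i - m)) :=
                  Finset.sum_congr rfl fun i _ => hconv α i
              _ ≤ (∑ j ∈ Finset.range N, V j * α ^ j) ^ 2 := this
          have hsq : (∑ j ∈ Finset.range N, V j * α ^ j) ^ 2 ≤ L ^ 2 :=
            pow_le_pow_left₀ hSnn ihN 2
          have h0 : V 0 * α ^ 0 = 1 := by rw [hV0]; simp
          rw [h0]
          nlinarith [hA, hsq, ihN, hαpos, key, hSnn]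
      exact summable_of_sum_range_le
        (fun n => mul_nonneg (hpos n).le (pow_nonneg hα0 n)) hbound
  · -- divergence
    intro α hαγ hsum
    have hαpos : 0 < α := lt_trans hγpos hαγ
    have hnn : ∀ j, 0 ≤ V j * α ^ j :=
      fun j => mul_nonneg (hpos j).le (pow_nonneg hαpos.le j)
    set S : ℝ := ∑' j, V j * α ^ j with hSdef
    have hS1 : 1 ≤ S := by
      have := Summable.le_tsum hsum 0 (fun i _ => hnn i)
      simpa [hV0] using this
    have hnorm : Summable fun j => ‖V j * α ^ j‖ := by
      have : (fun j => ‖V j * α ^ j‖) = fun j => V j * α ^ j := by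
        funext j; rw [Real.norm_of_nonneg (hnn j)]
      rw [this]; exact hsum
    have hcauchy : S * S = ∑' n, ∑ k ∈ Finset.range (n + 1),
        (V k * α ^ k) * (V (n - k) * α ^ (n - k)) :=
      tsum_mul_tsum_eq_tsum_sum_range_of_summable_norm hnorm hnorm
    have hconvsum : Summable fun n => ∑ k ∈ Finset.range (n + 1),
        (V k * α ^ k) * (V (n - k) * α ^ (n - k)) :=
      (summable_norm_sum_mul_range_of_summable_norm hnorm hnorm).of_norm
    -- shifted sum
    have hshift := Summable.tsum_eq_zero_add hsum
    have hterm : ∀ n : ℕ, V (n + 1) * α ^ (n + 1)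
        = α * ((∑ k ∈ Finset.range (n + 1), (V k * α ^ k) * (V (n - k) * α ^ (n - k)))
            + V n * α ^ n) := by
      intro n
      rw [← hconv α n, hVrec n, pow_succ]
      ring
    have hsum2 : Summable fun n => α * ((∑ k ∈ Finset.range (n + 1),
        (V k * α ^ k) * (V (n - k) * α ^ (n - k))) + V n * α ^ n) :=
      (hconvsum.add hsum).mul_left α
    have htsum : ∑' n, V (n + 1) * α ^ (n + 1) = α * (S * S + S) := by
      calc ∑' n, V (n + 1) * α ^ (n + 1)
          = ∑' n, α * ((∑ k ∈ Finset.range (n + 1),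
              (V k * α ^ k) * (V (n - k) * α ^ (n - k))) + V n * α ^ n) := by
            exact tsum_congr hterm
        _ = α * ∑' n, ((∑ k ∈ Finset.range (n + 1),
              (V k * α ^ k) * (V (n - k) * α ^ (n - k))) + V n * α ^ n) := tsum_mul_left
        _ = α * ((∑' n, ∑ k ∈ Finset.range (n + 1),
              (V k * α ^ k) * (V (n - k) * α ^ (n - k))) + ∑' n, V n * α ^ n) := by
            rw [Summable.tsum_add hconvsum hsum]
        _ = α * (S * S + S) := by rw [← hcauchy]
    have heq : S = 1 + α * (S * S + S) := by
      have h0 : V 0 * α ^ 0 = 1 := by rw [hV0]; norm_num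
      calc S = V 0 * α ^ 0 + ∑' n, V (n + 1) * α ^ (n + 1) := hshift
        _ = 1 + α * (S * S + S) := by rw [h0, htsum]
    -- contradiction
    rcases lt_or_ge α 1 with hα1 | hα1
    · have hd : α ^ 2 - 6 * α + 1 < 0 := by
        have h1' : 0 < α - (3 - 2 * Real.sqrt 2) := by linarith
        have h2' : 0 < (3 + 2 * Real.sqrt 2) - α := by nlinarith
        nlinarith [mul_pos h1' h2']
      nlinarith [sq_nonneg (2 * α * S + α - 1), hd, hαpos, heq]
    · nlinarith [hS1, hα1, hαpos, heq, sq_nonneg S]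
end

section
/- For every integer j ≥ 2, V_{j−1} = (1/2)·[ ((2j−3)!!/(2j)!!)·(γ^j + γ^{−j}) − Σ_{p=1}^{j−1} ((2p−3)!!/(2p)!!)·((2j−2p−3)!!/(2j−2p)!!)·γ^{2p−j} ], where γ = 3 − 2√2. -/
/-!
Let `S = √(1 - X) = ∑ sqrtOneSubCoeff n • Xⁿ`, whose coefficients for `n ≥ 1` are the
`-(2n-3)‼/(2n)‼` of the formula; `S² = 1 - X` follows from the Catalan equation `C = 1 + X C²`,
because `√(1 - 4X) = 1 - 2XC`. Since `γ + γ⁻¹ = 6`, the series `S(γX) S(γ⁻¹X)` squares to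
`(1 - γX)(1 - γ⁻¹X) = 1 - 6X + X²`. The recurrence says that `W = ∑ Vⱼ Xʲ` satisfies
`W = 1 + X(W² + W)`, which makes `1 - X - 2XW` square to the same polynomial. Both series have
constant coefficient `1`, so they are equal, and comparing the coefficients of `Xʲ` gives the
formula.
-/

open PowerSeries
open scoped Nat

lemma Finset.sum_range_succ_eq_add_add_sum_Icc {M : Type*} [AddCommMonoid M] (f : ℕ → M)
    {j : ℕ} (hj : 1 ≤ j) :
    ∑ k ∈ Finset.range (j + 1), f k = f 0 + f j + ∑ k ∈ Finset.Icc 1 (j - 1), f k := by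
  obtain ⟨i, rfl⟩ := Nat.exists_eq_add_of_le' hj
  rw [Finset.sum_range_succ, Finset.sum_range_succ', Nat.add_sub_cancel,
    ← Finset.Ico_add_one_right_eq_Icc, Finset.sum_Ico_eq_sum_range, Nat.add_sub_cancel]
  simp only [add_comm 1]
  abel

lemma pow_mul_inv_pow_sub {K : Type*} [DivisionRing K] {a : K} (ha : a ≠ 0) {k j : ℕ}
    (hkj : k ≤ j) : a ^ k * a⁻¹ ^ (j - k) = a ^ (2 * (k : ℤ) - j) := by
  rw [inv_pow, ← zpow_natCast, ← zpow_natCast, ← zpow_neg, ← zpow_add₀ ha]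
  push_cast [hkj]
  ring_nf

lemma constantCoeff_rescale {R : Type*} [CommSemiring R] (a : R) (f : R⟦X⟧) :
    constantCoeff (rescale a f) = constantCoeff f := by
  rw [← coeff_zero_eq_constantCoeff_apply, coeff_rescale, pow_zero, one_mul,
    coeff_zero_eq_constantCoeff_apply]

lemma eq_of_sq_eq_sq_of_constantCoeff {R : Type*} [CommRing R] [IsDomain R] [NeZero (2 : R)]
    {f g : R⟦X⟧} (hfg : f ^ 2 = g ^ 2) (hf : constantCoeff f = 1) (hg : constantCoeff g = 1) :
    f = g := by
  refine (sq_eq_sq_iff_eq_or_eq_neg.mp hfg).resolve_right fun h => two_ne_zero (α := R) ?_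
  have := congrArg constantCoeff h
  rw [map_neg, hf, hg] at this
  linear_combination this

lemma succ_succ_mul_catalan_succ (m : ℕ) :
    (m + 2) * catalan (m + 1) = 2 * (2 * m + 1) * catalan m := by
  refine Nat.eq_of_mul_eq_mul_left m.succ_pos ?_
  calc (m + 1) * ((m + 2) * catalan (m + 1))
      = (m + 1) * (m + 1).centralBinom := by rw [← succ_mul_catalan_eq_centralBinom]
    _ = 2 * (2 * m + 1) * ((m + 1) * catalan m) := by
      rw [Nat.succ_mul_centralBinom_succ, succ_mul_catalan_eq_centralBinom]
    _ = (m + 1) * (2 * (2 * m + 1) * catalan m) := by ring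

lemma catalan_mul_doubleFactorial (m : ℕ) :
    catalan m * (2 * m + 2)‼ = (2 * m - 1)‼ * 2 ^ (2 * m + 1) := by
  induction m with
  | zero => simp
  | succ m ih =>
    rw [show 2 * (m + 1) + 2 = 2 * m + 2 + 2 by ring, Nat.doubleFactorial_add_two,
      show 2 * (m + 1) - 1 = 2 * m + 1 by omega, Nat.doubleFactorial_add_one (2 * m)]
    calc catalan (m + 1) * ((2 * m + 2 + 2) * (2 * m + 2)‼)
        = 2 * ((m + 2) * catalan (m + 1)) * (2 * m + 2)‼ := by ring
      _ = 4 * (2 * m + 1) * (catalan m * (2 * m + 2)‼) := by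
        rw [succ_succ_mul_catalan_succ]; ring
      _ = _ := by rw [ih]; ring

/-- For `n = 1` the truncated `2 * n - 3 = 0` gives `0‼ = 1`, the value of `(-1)‼`. -/
noncomputable def sqrtOneSubCoeff (n : ℕ) : ℝ :=
  if n = 0 then 1 else -(((2 * n - 3)‼ : ℝ) / (2 * n)‼)

lemma sqrtOneSubCoeff_succ (m : ℕ) :
    sqrtOneSubCoeff (m + 1) = -(catalan m / 2 ^ (2 * m + 1)) := by
  have h : ((catalan m * (2 * m + 2)‼ : ℕ) : ℝ) = ((2 * m - 1)‼ * 2 ^ (2 * m + 1) : ℕ) :=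
    congrArg _ (catalan_mul_doubleFactorial m)
  push_cast at h
  rw [sqrtOneSubCoeff, if_neg m.succ_ne_zero, show 2 * (m + 1) - 3 = 2 * m - 1 by omega,
    show 2 * (m + 1) = 2 * m + 2 by ring, neg_inj,
    div_eq_div_iff (by positivity) (by positivity)]
  linarith

lemma mk_sqrtOneSubCoeff :
    mk sqrtOneSubCoeff = rescale 4⁻¹ (1 - 2 * X * map (Nat.castRingHom ℝ) catalanSeries) := by
  ext (_ | m)
  · simp [sqrtOneSubCoeff]
  · rw [coeff_mk, sqrtOneSubCoeff_succ, coeff_rescale, map_sub, coeff_one, if_neg m.succ_ne_zero,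
      mul_assoc, ← map_ofNat (C (R := ℝ)) 2, coeff_C_mul, coeff_succ_X_mul, coeff_map,
      catalanSeries_coeff, pow_succ, pow_mul, inv_pow]
    norm_num
    ring

lemma mk_sqrtOneSubCoeff_sq : mk sqrtOneSubCoeff ^ 2 = 1 - X := by
  have hC := congrArg (map (Nat.castRingHom ℝ)) catalanSeries_sq_mul_X_add_one
  rw [map_add, map_mul, map_pow, map_X, map_one] at hC
  rw [mk_sqrtOneSubCoeff, ← map_pow,
    show (1 - 2 * X * map (Nat.castRingHom ℝ) catalanSeries) ^ 2 = 1 - 4 * X by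
      linear_combination (4 * X) * hC,
    map_sub, map_one, map_mul, map_ofNat, rescale_X, ← mul_assoc, ← map_ofNat (C (R := ℝ)) 4,
    ← map_mul, mul_inv_cancel₀ four_ne_zero, map_one, one_mul]

lemma sq_rescale_mul_rescale_inv {a : ℝ} (ha : a ≠ 0) :
    (rescale a (mk sqrtOneSubCoeff) * rescale a⁻¹ (mk sqrtOneSubCoeff)) ^ 2 =
      1 - C (a + a⁻¹) * X + X ^ 2 := by
  rw [mul_pow, ← map_pow, ← map_pow, mk_sqrtOneSubCoeff_sq]
  have h : C a * C a⁻¹ = (1 : ℝ⟦X⟧) := by rw [← map_mul, mul_inv_cancel₀ ha, map_one]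
  simp only [map_sub, map_one, rescale_X, map_add]
  linear_combination X ^ 2 * h

lemma coeff_rescale_mul_rescale_inv {a : ℝ} (ha : a ≠ 0) {j : ℕ} (hj : 1 ≤ j) :
    coeff j (rescale a (mk sqrtOneSubCoeff) * rescale a⁻¹ (mk sqrtOneSubCoeff)) =
      sqrtOneSubCoeff j * (a ^ (j : ℤ) + a ^ (-(j : ℤ))) +
        ∑ p ∈ Finset.Icc 1 (j - 1),
          sqrtOneSubCoeff p * sqrtOneSubCoeff (j - p) * a ^ (2 * (p : ℤ) - j) := by
  have hterm : ∀ k ∈ Finset.range (j + 1),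
      a ^ k * sqrtOneSubCoeff k * (a⁻¹ ^ (j - k) * sqrtOneSubCoeff (j - k)) =
        sqrtOneSubCoeff k * sqrtOneSubCoeff (j - k) * a ^ (2 * (k : ℤ) - j) := fun k hk => by
    rw [← pow_mul_inv_pow_sub ha (Finset.mem_range_succ_iff.mp hk)]; ring
  rw [coeff_mul, Finset.Nat.sum_antidiagonal_eq_sum_range_succ fun k l =>
    coeff k (rescale a (mk sqrtOneSubCoeff)) * coeff l (rescale a⁻¹ (mk sqrtOneSubCoeff))]
  simp only [coeff_rescale, coeff_mk]
  rw [Finset.sum_congr rfl hterm, Finset.sum_range_succ_eq_add_add_sum_Icc _ hj, Nat.sub_zero,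
    Nat.sub_self, show sqrtOneSubCoeff 0 = 1 from if_pos rfl]
  push_cast
  ring_nf

section GeneratingFunction

variable {R : Type*} [CommRing R] {V : ℕ → R}

lemma mk_eq_one_add_X_mul_sq_add (hV0 : V 0 = 1)
    (hVrec : ∀ j : ℕ, V (j + 1) = (∑ i ∈ Finset.range (j + 1), V i * V (j - i)) + V j) :
    mk V = 1 + X * (mk V ^ 2 + mk V) := by
  ext (_ | n)
  · simp [hV0]
  · rw [coeff_mk, hVrec, map_add, coeff_one, if_neg n.succ_ne_zero, zero_add, coeff_succ_X_mul,
      map_add, sq, coeff_mul,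
      Finset.Nat.sum_antidiagonal_eq_sum_range_succ fun i k => coeff i (mk V) * coeff k (mk V)]
    simp

lemma one_sub_X_sub_two_X_mul_mk_sq (hV0 : V 0 = 1)
    (hVrec : ∀ j : ℕ, V (j + 1) = (∑ i ∈ Finset.range (j + 1), V i * V (j - i)) + V j) :
    (1 - X - 2 * X * mk V) ^ 2 = 1 - 6 * X + X ^ 2 := by
  linear_combination (-4 * X) * mk_eq_one_add_X_mul_sq_add hV0 hVrec

lemma coeff_one_sub_X_sub_two_X_mul_mk (V : ℕ → R) {j : ℕ} (hj : 2 ≤ j) :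
    coeff j (1 - X - 2 * X * mk V) = -2 * V (j - 1) := by
  obtain ⟨m, rfl⟩ := Nat.exists_eq_add_of_le' hj
  rw [mul_assoc, map_sub, map_sub, coeff_one, coeff_X, ← map_ofNat C 2, coeff_C_mul,
    coeff_succ_X_mul, coeff_mk]
  simp

end GeneratingFunction

lemma three_sub_two_sqrt_two_mul_three_add_two_sqrt_two :
    (3 - 2 * Real.sqrt 2) * (3 + 2 * Real.sqrt 2) = 1 := by
  nlinarith [Real.mul_self_sqrt (show (0 : ℝ) ≤ 2 by norm_num)]

/-- Explicit formula for V_{j−1}, j ≥ 2, in terms of double factorials and γ = 3 − 2√2.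
    (Note: with ℕ-subtraction, (2·1−3)‼ = 0‼ = 1, matching the convention (−1)‼ = 1.) -/
theorem stmt_17 (V : ℕ → ℝ) (hV0 : V 0 = 1)
    (hVrec : ∀ j : ℕ, V (j + 1) = (∑ i ∈ Finset.range (j + 1), V i * V (j - i)) + V j) :
    ∀ j : ℕ, 2 ≤ j →
      V (j - 1) = (1 / 2) *
        ((Nat.doubleFactorial (2 * j - 3) : ℝ) / (Nat.doubleFactorial (2 * j) : ℝ)
            * ((3 - 2 * Real.sqrt 2) ^ (j : ℤ) + (3 - 2 * Real.sqrt 2) ^ (-(j : ℤ)))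
          - ∑ p ∈ Finset.Icc 1 (j - 1),
              (Nat.doubleFactorial (2 * p - 3) : ℝ) / (Nat.doubleFactorial (2 * p) : ℝ)
                * ((Nat.doubleFactorial (2 * j - 2 * p - 3) : ℝ)
                    / (Nat.doubleFactorial (2 * j - 2 * p) : ℝ))
                * (3 - 2 * Real.sqrt 2) ^ (2 * (p : ℤ) - (j : ℤ))) := by
  intro j hj
  set γ : ℝ := 3 - 2 * Real.sqrt 2
  have hγ : γ ≠ 0 := left_ne_zero_of_mul_eq_one three_sub_two_sqrt_two_mul_three_add_two_sqrt_two
  have hγ_add_inv : γ + γ⁻¹ = 6 := by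
    rw [inv_eq_of_mul_eq_one_right three_sub_two_sqrt_two_mul_three_add_two_sqrt_two]; ring
  have hseries :
      1 - X - 2 * X * mk V = rescale γ (mk sqrtOneSubCoeff) * rescale γ⁻¹ (mk sqrtOneSubCoeff) := by
    refine eq_of_sq_eq_sq_of_constantCoeff ?_ (by simp)
      (by simp [constantCoeff_rescale, sqrtOneSubCoeff])
    rw [one_sub_X_sub_two_X_mul_mk_sq hV0 hVrec, sq_rescale_mul_rescale_inv hγ, hγ_add_inv,
      map_ofNat]
  have hcoeff := congrArg (coeff j) hseries
  rw [coeff_one_sub_X_sub_two_X_mul_mk V hj, coeff_rescale_mul_rescale_inv hγ (by omega)] at hcoeff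
  have hc : ∀ p, 1 ≤ p → sqrtOneSubCoeff p = -(((2 * p - 3)‼ : ℝ) / (2 * p)‼) := fun p hp =>
    if_neg (by omega)
  rw [hc j (by omega), Finset.sum_congr rfl fun p hp => by
    obtain ⟨hp1, hpj⟩ := Finset.mem_Icc.mp hp
    rw [hc p hp1, hc (j - p) (by omega), Nat.mul_sub]] at hcoeff
  simp only [neg_mul_neg] at hcoeff
  linarith
end
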